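/- arXiv:1103.0356 — 6 statements merged into one kernel-verified Lean document; each statement's English description precedes it below -/
import Mathlib

section
/- For every square matrix x with coefficients in a field k of characteristic zero, the transpose of x is conjugate to x; that is, there exists an invertible matrix g over k such that xᵗ = g x g⁻¹. -/
/-!
Regard `x` as making `kⁿ` a finitely generated torsion `k[X]`-module, which is a finite product
of cyclic modules `k[X] ⧸ (q)` with `q` monic. On `k[X] ⧸ (q)` the bilinear form
`(a, b) ↦ Λ (a * b)`, where `Λ` reads off the coefficient of `X ^ (deg q - 1)` of the reduced
representative, is nondegenerate, and multiplication by `X` is self-adjoint for it. Summing these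
forms gives a nondegenerate form `B` on `kⁿ` with `B (x u) w = B u (x w)`; its Gram matrix `S` is
invertible and satisfies `xᵀ S = S x`.
-/

open Polynomial

namespace Module.Dual

variable {R A : Type*} [CommRing R] [CommRing A] [Algebra R A]

noncomputable def mulForm (Λ : Module.Dual R A) : LinearMap.BilinForm R A :=
  (LinearMap.mul R A).compr₂ Λ

@[simp]
theorem mulForm_apply (Λ : Module.Dual R A) (a b : A) : Λ.mulForm a b = Λ (a * b) := rfl

theorem separatingLeft_mulForm_pi {ι : Type*} [Fintype ι] {A : ι → Type*}
    [∀ i, CommRing (A i)] [∀ i, Algebra R (A i)] {Λ : ∀ i, Module.Dual R (A i)}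
    (hΛ : ∀ i, (Λ i).mulForm.SeparatingLeft) :
    (∑ i, Λ i ∘ₗ LinearMap.proj i : Module.Dual R (∀ i, A i)).mulForm.SeparatingLeft := by
  classical
  intro a ha
  funext i
  refine hΛ i (a i) fun b => ?_
  have hab := ha (Pi.single i b)
  rw [mulForm_apply, ← Pi.single_mul_right, LinearMap.sum_apply,
    Finset.sum_eq_single_of_mem i (Finset.mem_univ i) fun j _ hj => by simp [hj]] at hab
  simpa using hab

theorem exists_separatingLeft_isAdjointPair_smul {S M : Type*} [CommRing S] [Algebra R S]
    [AddCommGroup M] [Module S M] [Module R M] [IsScalarTower R S M] [Algebra S A]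
    [IsScalarTower R S A] {Λ : Module.Dual R A} (hΛ : Λ.mulForm.SeparatingLeft)
    (e : M ≃ₗ[S] A) :
    ∃ B : LinearMap.BilinForm R M,
      B.SeparatingLeft ∧ ∀ s : S, B.IsAdjointPair B (s • ·) (s • ·) := by
  set e' := (e.restrictScalars R).symm
  refine ⟨e'.arrowCongr (e'.arrowCongr (LinearEquiv.refl R R)) Λ.mulForm, hΛ.congr e' e',
    fun s u w => ?_⟩
  simp [e']

end Module.Dual

namespace Polynomial

variable {R : Type*} [CommRing R] {q : R[X]}

noncomputable def topCoeffQuot (hq : q.Monic) : Module.Dual R (R[X] ⧸ Ideal.span {q}) :=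
  Submodule.liftQ ((Ideal.span {q}).restrictScalars R)
      (lcoeff R (q.natDegree - 1) ∘ₗ modByMonicHom q)
      (fun f hf => by
        rw [Submodule.restrictScalars_mem, Ideal.mem_span_singleton] at hf
        simp [(modByMonic_eq_zero_iff_dvd hq).mpr hf]) ∘ₗ
    (Submodule.Quotient.restrictScalarsEquiv R (Ideal.span {q})).symm.toLinearMap

theorem topCoeffQuot_mk (hq : q.Monic) (f : R[X]) :
    topCoeffQuot hq (Ideal.Quotient.mk _ f) = (f %ₘ q).coeff (q.natDegree - 1) := rfl

theorem separatingLeft_mulForm_topCoeffQuot (hq : q.Monic) :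
    (topCoeffQuot hq).mulForm.SeparatingLeft := by
  intro α hα
  obtain ⟨s, rfl⟩ := Ideal.Quotient.mk_surjective α
  have hsr : Ideal.Quotient.mk (Ideal.span {q}) (s %ₘ q) = Ideal.Quotient.mk _ s := by
    rw [Ideal.Quotient.mk_eq_mk_iff_sub_mem, Ideal.mem_span_singleton,
      modByMonic_eq_sub_mul_div s q, sub_sub_cancel_left, dvd_neg]
    exact dvd_mul_right _ _
  rw [← hsr] at hα ⊢
  set r := s %ₘ q
  by_contra hr
  have hr0 : r ≠ 0 := by rintro h; rw [h, map_zero] at hr; exact hr rfl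
  have : Nontrivial R := ⟨⟨r.leadingCoeff, 0, leadingCoeff_ne_zero.mpr hr0⟩⟩
  have hrq : r.natDegree < q.natDegree :=
    natDegree_lt_natDegree hr0 (degree_modByMonic_lt s hq)
  -- multiplying by `X ^ m` moves the leading coefficient of `r` to degree `deg q - 1`
  set m := q.natDegree - 1 - r.natDegree
  have hdeg : (r * X ^ m).degree < q.degree := by
    rw [degree_eq_natDegree hq.ne_zero]
    refine (degree_le_natDegree.trans (Nat.cast_le.mpr natDegree_mul_le)).trans_lt ?_
    rw [natDegree_X_pow]
    exact_mod_cast (by omega : r.natDegree + m < q.natDegree)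
  apply leadingCoeff_ne_zero.mpr hr0
  have := hα (Ideal.Quotient.mk _ (X ^ m))
  rw [Module.Dual.mulForm_apply, ← map_mul, topCoeffQuot_mk,
    (modByMonic_eq_self_iff hq).mpr hdeg, coeff_mul_X_pow', if_pos (by omega)] at this
  rwa [show q.natDegree - 1 - m = r.natDegree by omega] at this

end Polynomial

universe u

theorem Module.exists_linearEquiv_pi_quotient_span_monic {k : Type u} {M : Type*} [Field k]
    [AddCommGroup M] [Module k[X] M] [Module.Finite k[X] M] (hM : Module.IsTorsion k[X] M) :
    ∃ (ι : Type u) (_ : Fintype ι) (q : ι → k[X]), (∀ i, (q i).Monic) ∧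
      Nonempty (M ≃ₗ[k[X]] ∀ i, k[X] ⧸ Ideal.span {q i}) := by
  classical
  obtain ⟨ι, _, p, hp, e, ⟨Φ⟩⟩ := Module.equiv_directSum_of_isTorsion hM
  have hpe (i : ι) : p i ^ e i ≠ 0 := pow_ne_zero _ (hp i).ne_zero
  refine ⟨ι, inferInstance, fun i => normalize (p i ^ e i), fun i => monic_normalize (hpe i),
    ⟨Φ ≪≫ₗ DirectSum.linearEquivFunOnFintype k[X] ι _ ≪≫ₗ
      LinearEquiv.piCongrRight fun i => Submodule.quotEquivOfEq _ _ ?_⟩⟩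
  exact Ideal.span_singleton_eq_span_singleton.mpr (associated_normalize _)

theorem Module.End.exists_separatingLeft_isAdjointPair {k V : Type*} [Field k] [AddCommGroup V]
    [Module k V] [FiniteDimensional k V] (φ : Module.End k V) :
    ∃ B : LinearMap.BilinForm k V, B.SeparatingLeft ∧ B.IsAdjointPair B φ φ := by
  obtain ⟨ι, _, q, hq, ⟨Φ⟩⟩ := Module.exists_linearEquiv_pi_quotient_span_monic
    (Module.AEval.isTorsion_of_finiteDimensional k V φ)
  obtain ⟨B, hB, hX⟩ := Module.Dual.exists_separatingLeft_isAdjointPair_smul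
    (Module.Dual.separatingLeft_mulForm_pi fun i => separatingLeft_mulForm_topCoeffQuot (hq i)) Φ
  set e := (Module.AEval'.of φ).symm
  refine ⟨e.arrowCongr (e.arrowCongr (LinearEquiv.refl k k)) B, hB.congr e e, fun u w => ?_⟩
  simpa [e, Module.AEval'.X_smul_of] using hX X (Module.AEval'.of φ u) (Module.AEval'.of φ w)

theorem transpose_conjugate_general {k : Type} [Field k] {n : ℕ}
    (x : Matrix (Fin n) (Fin n) k) :
    ∃ g : Matrix (Fin n) (Fin n) k, IsUnit g ∧ x.transpose = g * x * g⁻¹ := by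
  obtain ⟨B, hB, hx⟩ := Module.End.exists_separatingLeft_isAdjointPair (Matrix.toLin' x)
  set S := LinearMap.toMatrix₂' k B
  have hS : IsUnit S.det := (Matrix.separatingLeft_iff_det_ne_zero.mp
    (LinearMap.separatingLeft_toMatrix₂'_iff.mpr hB)).isUnit
  have hxS : x.transpose * S = S * x := by
    rw [← Matrix.toLinearMap₂'_toMatrix' (R := k) B] at hx
    exact (isAdjointPair_toLinearMap₂' _ _ _ _).mp hx
  refine ⟨S, (Matrix.isUnit_iff_isUnit_det S).mpr hS, ?_⟩
  rw [← hxS, Matrix.mul_assoc, Matrix.mul_nonsing_inv S hS, Matrix.mul_one]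

/-- For every square matrix `x` over a field `k` of characteristic zero, the transpose of
`x` is conjugate to `x`: there is an invertible matrix `g` with `xᵗ = g * x * g⁻¹`. -/
theorem transpose_conjugate {k : Type} [Field k] [CharZero k] {n : ℕ}
    (x : Matrix (Fin n) (Fin n) k) :
    ∃ g : Matrix (Fin n) (Fin n) k, IsUnit g ∧ x.transpose = g * x * g⁻¹ :=
  transpose_conjugate_general x
end

section
/- A commutative involutive algebra (A, τ) over a field k is simple (i.e., A is nonzero and every τ-stable ideal of A is either zero or A) if and only if the subalgebra A⁺ of τ-fixed elements is a field. -/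
/-- The subalgebra of `τ`-fixed elements of `A`. -/
def fixedSubalgebra {k A : Type} [CommRing k] [CommRing A] [Algebra k A]
    (τ : A ≃ₐ[k] A) : Subalgebra k A where
  carrier := {a | τ a = a}
  mul_mem' := by
    intro a b ha hb
    simp only [Set.mem_setOf_eq] at *
    rw [map_mul, ha, hb]
  add_mem' := by
    intro a b ha hb
    simp only [Set.mem_setOf_eq] at *
    rw [map_add, ha, hb]
  algebraMap_mem' := fun r => τ.commutes r

/-- A commutative involutive algebra `(A, τ)` over a field `k` of characteristic zero
(a commutative semisimple finite-dimensional `k`-algebra with involution `τ`) is simple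
(nonzero and every `τ`-stable ideal is `⊥` or `⊤`) if and only if the fixed subalgebra
`A⁺` is a field. -/
theorem simple_iff_fixed_isField {k A : Type} [Field k] [CharZero k]
    [CommRing A] [Algebra k A] [FiniteDimensional k A] [IsSemisimpleRing A]
    (τ : A ≃ₐ[k] A) (hτ : ∀ a, τ (τ a) = a) :
    (Nontrivial A ∧ ∀ I : Ideal A, (∀ a ∈ I, τ a ∈ I) → I = ⊥ ∨ I = ⊤) ↔
      IsField (fixedSubalgebra τ) := by
  constructor
  · rintro ⟨hA, hsimple⟩
    refine ⟨⟨0, 1, fun h => zero_ne_one (congrArg Subtype.val h)⟩, mul_comm, ?_⟩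
    rintro ⟨x, hx⟩ hne
    have hx0 : x ≠ 0 := fun h => hne (Subtype.ext h)
    have hst : ∀ a ∈ Ideal.span {x}, τ a ∈ Ideal.span {x} := by
      intro a ha
      rw [Ideal.mem_span_singleton] at ha ⊢
      obtain ⟨c, rfl⟩ := ha
      exact ⟨τ c, by rw [map_mul, hx]⟩
    rcases hsimple _ hst with h | h
    · exact absurd (Ideal.span_eq_bot.mp h x rfl) hx0
    · have h1 : x ∣ 1 := Ideal.mem_span_singleton.mp (h ▸ Submodule.mem_top)
      obtain ⟨y, hy⟩ := h1
      have hxy : x * τ y = 1 := by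
        have := congrArg τ hy.symm
        rwa [map_mul, hx, map_one] at this
      have hyfix : τ y = y := by
        calc τ y = (x * y) * τ y := by rw [← hy, one_mul]
        _ = (x * τ y) * y := by ring
        _ = y := by rw [hxy, one_mul]
      exact ⟨⟨y, hyfix⟩, Subtype.ext hy.symm⟩
  · intro hF
    obtain ⟨⟨u, v, huv⟩, _, hinv⟩ := hF
    have hA : Nontrivial A := ⟨u.1, v.1, fun h => huv (Subtype.ext h)⟩
    refine ⟨hA, fun I hI => ?_⟩
    by_cases hbot : I = ⊥
    · exact Or.inl hbot
    right
    obtain ⟨J, hJ⟩ := exists_isCompl I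
    have h1 : (1 : A) ∈ I ⊔ J := hJ.sup_eq_top ▸ Submodule.mem_top
    obtain ⟨e, he, f, hf, hef⟩ := Submodule.mem_sup.mp h1
    have hIJ : ∀ z, z ∈ I → z ∈ J → z = 0 := fun z hzI hzJ =>
      (Submodule.mem_bot A).mp (hJ.inf_eq_bot ▸ Submodule.mem_inf.mpr ⟨hzI, hzJ⟩)
    have hef0 : e * f = 0 := hIJ _ (I.mul_mem_right f he) (J.mul_mem_left e hf)
    have hee : e * e = e := by
      have h2 : e * 1 = e * (e + f) := by rw [hef]
      rw [mul_one, mul_add, hef0, add_zero] at h2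
      exact h2.symm
    have he0 : e ≠ 0 := by
      intro h0
      apply hbot
      rw [eq_bot_iff]
      intro x hx
      have hxf : x = x * f := by linear_combination x * h0 - x * hef
      have hxJ : x ∈ J := hxf ▸ J.mul_mem_left x hf
      exact (Submodule.mem_bot A).mpr (hIJ x hx hxJ)
    set a := e + τ e - e * τ e with ha_def
    have haf : τ a = a := by
      simp only [ha_def, map_sub, map_add, map_mul, hτ]
      ring
    have haI : a ∈ I := I.sub_mem (I.add_mem he (hI e he)) (I.mul_mem_left e (hI e he))
    have hae : a * e = e := by
      simp only [ha_def]
      linear_combination (1 - τ e) * hee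
    have ha0 : a ≠ 0 := by
      intro h0
      rw [h0, zero_mul] at hae
      exact he0 hae.symm
    have haF : a ∈ fixedSubalgebra τ := haf
    obtain ⟨b, hb⟩ := hinv (a := ⟨a, haF⟩) (fun h => ha0 (congrArg Subtype.val h))
    have hab : a * b.1 = 1 := congrArg Subtype.val hb
    rw [Ideal.eq_top_iff_one, ← hab]
    exact I.mul_mem_right b.1 haI
end

section
/- Let (A, τ) be a simple commutative involutive algebra with A = A⁺ × A⁺ (τ the coordinate swap). Then up to isomorphism there is a unique simple ε-Hermitian A-module, and it is free of rank 1 over A. -/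
/-- `B` is an `ε`-Hermitian form on the `A`-module `E`, with respect to the involution
`τ` of `A`: it is biadditive, `A`-linear in the first variable, `(ε, τ)`-Hermitian
symmetric, and non-degenerate. -/
def IsHermForm (A : Type) [CommRing A] (τ : A → A) (ε : A)
    (E : Type) [AddCommGroup E] [Module A E] (B : E → E → A) : Prop :=
  (∀ u u' v, B (u + u') v = B u v + B u' v) ∧
  (∀ u v v', B u (v + v') = B u v + B u v') ∧
  (∀ (a : A) (u v : E), B (a • u) v = a * B u v) ∧
  (∀ u v, B u v = ε * τ (B v u)) ∧
  (∀ u, (∀ v, B u v = 0) → u = 0)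

/-- The `ε`-Hermitian `A`-module `(E, B)` is simple: it is nonzero and every
non-degenerate `A`-submodule is `⊥` or `⊤`. -/
def IsSimpleHerm (A : Type) [CommRing A] (τ : A → A) (ε : A)
    (E : Type) [AddCommGroup E] [Module A E] (B : E → E → A) : Prop :=
  Nontrivial E ∧
    ∀ N : Submodule A E, (∀ u ∈ N, (∀ v ∈ N, B u v = 0) → u = 0) → N = ⊥ ∨ N = ⊤

/-!
The swap exchanges the idempotents `e₁ = (1, 0)` and `e₂ = (0, 1)` of `A = F × F`, so `e₁ E` and
`e₂ E` are totally isotropic and the form pairs them: if `B x y` has nonzero first coordinate, then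
`w = e₁ x + e₂ y` has `B w w = ((B x y).1, ε.2 (B x y).1)`, a unit of `A`. Whenever `B w w` is a
unit, `A w` is non-degenerate and `a ↦ a w` is injective, so in a simple module `a ↦ a w` is an
isomorphism `A ≃ E`. Rescaling `w` to get `B w w = (1, ε.2)` pins down the form on `E ≅ A`, which
gives uniqueness; the same unit vector inside a non-degenerate ideal shows that `A` itself, with
this form, is simple.
-/

section HermForm

variable {A : Type} [CommRing A] {τ : A → A} {ε : A}
  {E : Type} [AddCommGroup E] [Module A E] {B : E → E → A}

theorem IsHermForm.smul_right (hB : IsHermForm A τ ε E B) (hτ : ∀ a b, τ (a * b) = τ a * τ b)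
    (a : A) (u v : E) : B u (a • v) = τ a * B u v := by
  obtain ⟨-, -, hsmul, hsymm, -⟩ := hB
  rw [hsymm, hsmul, hτ, hsymm u v]
  ring

theorem IsHermForm.smul_smul_self (hB : IsHermForm A τ ε E B)
    (hτ : ∀ a b, τ (a * b) = τ a * τ b) (a b : A) (w : E) :
    B (a • w) (b • w) = a * τ b * B w w := by
  rw [hB.2.2.1, hB.smul_right hτ, mul_assoc]

theorem IsHermForm.bijective_toSpanSingleton [Nontrivial A] (hB : IsHermForm A τ ε E B)
    (hS : IsSimpleHerm A τ ε E B) {w : E} (hw : IsUnit (B w w)) :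
    Function.Bijective (LinearMap.toSpanSingleton A E w) := by
  have hzero : ∀ v, B 0 v = 0 := fun v => by simpa using hB.2.2.1 0 0 v
  have hkey : ∀ a : A, B (a • w) w = 0 → a = 0 := fun a h =>
    hw.mul_left_eq_zero.mp (hB.2.2.1 a w w ▸ h)
  refine ⟨(injective_iff_map_eq_zero _).mpr fun a ha => hkey a ?_, ?_⟩
  · rw [← LinearMap.toSpanSingleton_apply, ha, hzero]
  have hnondeg : ∀ x ∈ A ∙ w, (∀ y ∈ A ∙ w, B x y = 0) → x = 0 := by
    rintro x hx hxy
    obtain ⟨a, rfl⟩ := Submodule.mem_span_singleton.mp hx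
    rw [hkey a (hxy w (Submodule.mem_span_singleton_self w)), zero_smul]
  rw [← LinearMap.range_eq_top, ← LinearMap.span_singleton_eq_range]
  refine (hS.2 _ hnondeg).resolve_left fun hbot => not_isUnit_zero (M₀ := A) ?_
  rwa [Submodule.span_singleton_eq_bot.mp hbot, hzero] at hw

theorem isHermForm_mul_mul (τ : A →+* A) (hτ : ∀ a, τ (τ a) = a) {c : A} (hc : IsUnit c)
    (hcε : c = ε * τ c) : IsHermForm A τ ε A (fun a b => a * τ b * c) := by
  refine ⟨fun _ _ _ => by ring, fun _ _ _ => by simp only [map_add]; ring,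
    fun _ _ _ => by simp only [smul_eq_mul]; ring, fun a b => ?_, fun a h => ?_⟩
  · simp only [map_mul, hτ]
    nth_rewrite 1 [hcε]
    ring
  · simpa [hc.mul_left_eq_zero] using h 1

end HermForm

section Split

variable {F : Type} [Field F] {ε : F × F}
  {E : Type} [AddCommGroup E] [Module (F × F) E] {B : E → E → F × F}

theorem IsHermForm.apply_self_fst_smul_add_snd_smul (hB : IsHermForm (F × F) Prod.swap ε E B)
    (x y : E) :
    B (((1, 0) : F × F) • x + ((0, 1) : F × F) • y) (((1, 0) : F × F) • x + ((0, 1) : F × F) • y) =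
      ((B x y).1, ε.2 * (B x y).1) := by
  have hsmul' := hB.smul_right Prod.swap_mul
  obtain ⟨hadd, hadd', hsmul, hsymm, -⟩ := hB
  simp only [hadd, hadd', hsmul, hsmul']
  rw [hsymm y x]
  ext <;> simp

theorem IsHermForm.exists_isUnit_apply_self (hB : IsHermForm (F × F) Prod.swap ε E B)
    (hε : IsUnit ε) {x y : E} (hxy : B x y ≠ 0) :
    ∃ a b : F × F, IsUnit (B (a • x + b • y) (a • x + b • y)) := by
  obtain ⟨hε₁, hε₂⟩ := Prod.isUnit_iff.mp hε
  have hunit : ∀ x y : E, (B x y).1 ≠ 0 →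
      IsUnit (B (((1, 0) : F × F) • x + ((0, 1) : F × F) • y)
        (((1, 0) : F × F) • x + ((0, 1) : F × F) • y)) := fun x y h => by
    rw [hB.apply_self_fst_smul_add_snd_smul, Prod.isUnit_iff]
    exact ⟨h.isUnit, (mul_ne_zero hε₂.ne_zero h).isUnit⟩
  by_cases hfst : (B x y).1 = 0
  · have hyx : (B y x).1 ≠ 0 := by
      rw [hB.2.2.2.1 y x]
      exact mul_ne_zero hε₁.ne_zero fun h => hxy (Prod.ext hfst h)
    exact ⟨(0, 1), (1, 0), add_comm (((0, 1) : F × F) • x) _ ▸ hunit y x hyx⟩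
  · exact ⟨(1, 0), (0, 1), hunit x y hfst⟩

theorem IsHermForm.exists_apply_self_eq [Nontrivial E] (hB : IsHermForm (F × F) Prod.swap ε E B)
    (hε : IsUnit ε) : ∃ w : E, B w w = (1, ε.2) := by
  obtain ⟨x, hx⟩ := exists_ne (0 : E)
  obtain ⟨y, hxy⟩ : ∃ y, B x y ≠ 0 := by
    by_contra! h
    exact hx (hB.2.2.2.2 x h)
  obtain ⟨a, b, hw⟩ := hB.exists_isUnit_apply_self hε hxy
  set w := a • x + b • y
  have hc : (B w w).1 ≠ 0 := (Prod.isUnit_iff.mp hw).1.ne_zero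
  have hsnd : (B w w).2 = ε.2 * (B w w).1 := by
    conv_lhs => rw [hB.2.2.2.1]
    rfl
  refine ⟨(((B w w).1)⁻¹, (1 : F)) • w, ?_⟩
  rw [hB.smul_smul_self Prod.swap_mul]
  ext <;> simp [hsnd] <;> field_simp

theorem IsSimpleHerm.exists_linearEquiv (hB : IsHermForm (F × F) Prod.swap ε E B)
    (hS : IsSimpleHerm (F × F) Prod.swap ε E B) (hε : IsUnit ε) :
    ∃ e : (F × F) ≃ₗ[F × F] E, ∀ a b, B (e a) (e b) = a * Prod.swap b * (1, ε.2) := by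
  have := hS.1
  obtain ⟨w, hw⟩ := hB.exists_apply_self_eq hε
  have hunit : IsUnit (B w w) :=
    hw ▸ Prod.isUnit_iff.mpr ⟨isUnit_one, (Prod.isUnit_iff.mp hε).2⟩
  refine ⟨LinearEquiv.ofBijective _ (hB.bijective_toSpanSingleton hS hunit), fun a b => ?_⟩
  simp only [LinearEquiv.ofBijective_apply, LinearMap.toSpanSingleton_apply]
  rw [hB.smul_smul_self Prod.swap_mul, hw]

theorem isSimpleHerm_mul_swap_mul {c : F × F}
    (hB : IsHermForm (F × F) Prod.swap ε (F × F) (fun a b => a * Prod.swap b * c))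
    (hε : IsUnit ε) :
    IsSimpleHerm (F × F) Prod.swap ε (F × F) (fun a b => a * Prod.swap b * c) := by
  refine ⟨inferInstance, fun N hN => or_iff_not_imp_left.mpr fun hbot => ?_⟩
  obtain ⟨x, hxN, hx⟩ := (Submodule.ne_bot_iff N).mp hbot
  obtain ⟨y, hyN, hxy⟩ : ∃ y ∈ N, x * Prod.swap y * c ≠ 0 := by
    by_contra! h
    exact hx (hN x hxN h)
  obtain ⟨a, b, hw⟩ := hB.exists_isUnit_apply_self hε hxy
  exact Ideal.eq_top_of_isUnit_mem N (N.add_mem (N.smul_mem a hxN) (N.smul_mem b hyN))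
    (isUnit_of_mul_isUnit_left (isUnit_of_mul_isUnit_left hw))

end Split

theorem simple_hermitian_module_split_case_general (F : Type) [Field F] (ε : F × F) (hε : ε = 1 ∨ ε = -1) :
    -- existence: there is a simple ε-Hermitian module over A = F × F
    (∃ B : (F × F) → (F × F) → (F × F),
        IsHermForm (F × F) Prod.swap ε (F × F) B ∧
        IsSimpleHerm (F × F) Prod.swap ε (F × F) B) ∧
    -- uniqueness: any two simple ε-Hermitian A-modules are isomorphic
    (∀ (E₁ : Type) [AddCommGroup E₁] [Module (F × F) E₁] [Module.Finite (F × F) E₁]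
       (E₂ : Type) [AddCommGroup E₂] [Module (F × F) E₂] [Module.Finite (F × F) E₂]
       (B₁ : E₁ → E₁ → F × F) (B₂ : E₂ → E₂ → F × F),
        IsHermForm (F × F) Prod.swap ε E₁ B₁ → IsSimpleHerm (F × F) Prod.swap ε E₁ B₁ →
        IsHermForm (F × F) Prod.swap ε E₂ B₂ → IsSimpleHerm (F × F) Prod.swap ε E₂ B₂ →
        ∃ φ : E₁ ≃ₗ[F × F] E₂, ∀ u v, B₂ (φ u) (φ v) = B₁ u v) ∧
    -- every simple ε-Hermitian A-module is free of rank 1 over A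
    (∀ (E : Type) [AddCommGroup E] [Module (F × F) E] [Module.Finite (F × F) E]
       (B : E → E → F × F),
        IsHermForm (F × F) Prod.swap ε E B → IsSimpleHerm (F × F) Prod.swap ε E B →
        Nonempty (Module.Basis (Fin 1) (F × F) E)) := by
  have hε₁₂ : ε.1 * ε.2 = 1 := by rcases hε with rfl | rfl <;> simp
  have hεu : IsUnit ε := by rcases hε with rfl | rfl <;> simp
  refine ⟨?_, ?_, ?_⟩
  · have hc : IsUnit ((1, ε.2) : F × F) :=
      Prod.isUnit_iff.mpr ⟨isUnit_one, (Prod.isUnit_iff.mp hεu).2⟩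
    have hB := isHermForm_mul_mul (RingEquiv.prodComm : F × F ≃+* F × F).toRingHom
      Prod.swap_swap (ε := ε) hc (by ext <;> simp [hε₁₂])
    exact ⟨_, hB, isSimpleHerm_mul_swap_mul hB hεu⟩
  · intro E₁ _ _ _ E₂ _ _ _ B₁ B₂ hB₁ hS₁ hB₂ hS₂
    obtain ⟨e₁, he₁⟩ := hS₁.exists_linearEquiv hB₁ hεu
    obtain ⟨e₂, he₂⟩ := hS₂.exists_linearEquiv hB₂ hεu
    refine ⟨e₁.symm.trans e₂, fun u v => ?_⟩
    rw [LinearEquiv.trans_apply, LinearEquiv.trans_apply, he₂, ← he₁, e₁.apply_symm_apply,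
      e₁.apply_symm_apply]
  · intro E _ _ _ B hB hS
    obtain ⟨e, -⟩ := hS.exists_linearEquiv hB hεu
    exact ⟨(Module.Basis.singleton (Fin 1) (F × F)).map e⟩

/-- Let `(A, τ)` be the simple commutative involutive algebra `A = A⁺ × A⁺` with `τ` the
coordinate swap (`A⁺ = F` a field).  Then up to isomorphism there is a unique simple
`ε`-Hermitian `A`-module, and it is free of rank `1` over `A`. -/
theorem simple_hermitian_module_split_case (k F : Type) [Field k] [CharZero k]
    [Field F] [Algebra k F] [FiniteDimensional k F]
    (ε : F × F) (hε : ε = 1 ∨ ε = -1) :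
    -- existence: there is a simple ε-Hermitian module over A = F × F
    (∃ B : (F × F) → (F × F) → (F × F),
        IsHermForm (F × F) Prod.swap ε (F × F) B ∧
        IsSimpleHerm (F × F) Prod.swap ε (F × F) B) ∧
    -- uniqueness: any two simple ε-Hermitian A-modules are isomorphic
    (∀ (E₁ : Type) [AddCommGroup E₁] [Module (F × F) E₁] [Module.Finite (F × F) E₁]
       (E₂ : Type) [AddCommGroup E₂] [Module (F × F) E₂] [Module.Finite (F × F) E₂]
       (B₁ : E₁ → E₁ → F × F) (B₂ : E₂ → E₂ → F × F),
        IsHermForm (F × F) Prod.swap ε E₁ B₁ → IsSimpleHerm (F × F) Prod.swap ε E₁ B₁ →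
        IsHermForm (F × F) Prod.swap ε E₂ B₂ → IsSimpleHerm (F × F) Prod.swap ε E₂ B₂ →
        ∃ φ : E₁ ≃ₗ[F × F] E₂, ∀ u v, B₂ (φ u) (φ v) = B₁ u v) ∧
    -- every simple ε-Hermitian A-module is free of rank 1 over A
    (∀ (E : Type) [AddCommGroup E] [Module (F × F) E] [Module.Finite (F × F) E]
       (B : E → E → F × F),
        IsHermForm (F × F) Prod.swap ε E B → IsSimpleHerm (F × F) Prod.swap ε E B →
        Nonempty (Module.Basis (Fin 1) (F × F) E)) :=
  simple_hermitian_module_split_case_general F ε hε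
end

section
/- Every ε-Hermitian A-module is isomorphic to an orthogonal direct sum of simple ε-Hermitian A-modules. -/
/-! A commutative semisimple algebra is a finite product of fields, so it carries a Frobenius
functional `l : A → k`: one whose kernel contains no nonzero ideal. Composing with `l` turns `B`
into a `k`-bilinear form on `E` whose orthogonal of an `A`-submodule is the `B`-orthogonal, so the
dimension formula over `k` shows that every non-degenerate submodule `P` splits off,
`E = P ⊕ P^⊥`. Splitting off a minimal nonzero non-degenerate submodule, which is simple by
minimality, and recursing on the well-founded lattice of submodules gives the decomposition. -/

open Module

def IsFrobeniusFunctional {k A : Type*} [Field k] [CommRing A] [Algebra k A] (l : Dual k A) :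
    Prop :=
  ∀ x : A, (∀ a, l (a * x) = 0) → x = 0

theorem IsSemisimpleRing.exists_isFrobeniusFunctional (k A : Type*) [Field k] [CommRing A]
    [Algebra k A] [IsSemisimpleRing A] : ∃ l : Dual k A, IsFrobeniusFunctional l := by
  classical
  have : Fintype (MaximalSpectrum A) := Fintype.ofFinite _
  let (m : MaximalSpectrum A) : Field (A ⧸ m.asIdeal) :=
    have := m.isMaximal; Ideal.Quotient.field m.asIdeal
  have hφ (m : MaximalSpectrum A) : ∃ φ : Dual k (A ⧸ m.asIdeal), φ 1 ≠ 0 := by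
    by_contra! h
    exact one_ne_zero ((forall_dual_apply_eq_zero_iff k _).mp h)
  choose φ hφ using hφ
  refine ⟨∑ m, (φ m).comp (Ideal.Quotient.mkₐ k m.asIdeal).toLinearMap, fun x hx => ?_⟩
  set e := IsArtinianRing.equivPi A
  by_contra hx0
  obtain ⟨m, hm⟩ : ∃ m, e x m ≠ 0 := by
    by_contra! h
    exact hx0 (e.injective (by ext m; simp [h]))
  set a := e.symm (Pi.single m (e x m)⁻¹)
  have hax (m' : MaximalSpectrum A) :
      Ideal.Quotient.mk m'.asIdeal (a * x) = (Pi.single m 1 : ∀ m, A ⧸ m.asIdeal) m' := by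
    rw [← IsArtinianRing.equivPi_apply, map_mul, e.apply_symm_apply]
    rcases eq_or_ne m' m with rfl | hm'
    · simpa only [Pi.mul_apply, Pi.single_eq_same] using inv_mul_cancel₀ hm
    · simp [hm']
  apply hφ m
  rw [← hx a, LinearMap.coe_sum, Finset.sum_apply, Finset.sum_eq_single m]
  · simp [hax]
  · intro m' _ hm'
    simp [hax, hm']
  · simp

def NondegenerateOn {A E : Type*} [CommRing A] [AddCommGroup E] [Module A E]
    (B : E → E → A) (N : Submodule A E) : Prop :=
  ∀ u ∈ N, (∀ v ∈ N, B u v = 0) → u = 0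

namespace IsHermForm

section Ring

variable {A E F : Type} [CommRing A] [AddCommGroup E] [Module A E]
  [FunLike F A A] [RingHomClass F A A] {τ : F} {ε : A} {B : E → E → A}

lemma map_smul_right (hB : IsHermForm A τ ε E B) (a : A) (u v : E) :
    B u (a • v) = τ a * B u v := by
  rw [hB.2.2.2.1, hB.2.2.1, map_mul, hB.2.2.2.1 u v]
  ring

lemma eq_zero_comm (hB : IsHermForm A τ ε E B) {u v : E} : B u v = 0 ↔ B v u = 0 :=
  ⟨fun h => by rw [hB.2.2.2.1, h, map_zero, mul_zero],
    fun h => by rw [hB.2.2.2.1, h, map_zero, mul_zero]⟩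

def toSesqForm (hB : IsHermForm A τ ε E B) : E →ₗ[A] E →ₛₗ[(τ : A →+* A)] A :=
  LinearMap.mk₂'ₛₗ _ _ B hB.1 hB.2.2.1 hB.2.1 hB.map_smul_right

@[simp]
lemma toSesqForm_apply (hB : IsHermForm A τ ε E B) (u v : E) : hB.toSesqForm u v = B u v := rfl

lemma le_orthogonalBilin_comm (hB : IsHermForm A τ ε E B) {P Q : Submodule A E} :
    Q ≤ P.orthogonalBilin hB.toSesqForm ↔ P ≤ Q.orthogonalBilin hB.toSesqForm :=
  ⟨fun h u hu v hv => by simpa using hB.eq_zero_comm.mp (h hv u hu),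
    fun h u hu v hv => by simpa using hB.eq_zero_comm.mp (h hv u hu)⟩

lemma disjoint_orthogonalBilin (hB : IsHermForm A τ ε E B) {N : Submodule A E}
    (hN : NondegenerateOn B N) :
    Disjoint N (N.orthogonalBilin hB.toSesqForm) :=
  Submodule.disjoint_def.mpr fun u hu hu' =>
    hN u hu fun v hv => hB.eq_zero_comm.mpr (by simpa using hu' v hv)

lemma iSupIndep_of_pairwise_le_orthogonalBilin (hB : IsHermForm A τ ε E B) {ι : Type*}
    {M : ι → Submodule A E} (hM : ∀ i, NondegenerateOn B (M i))
    (horth : Pairwise fun i j => M j ≤ (M i).orthogonalBilin hB.toSesqForm) :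
    iSupIndep M :=
  iSupIndep_def.mpr fun i =>
    (hB.disjoint_orthogonalBilin (hM i)).mono_right (iSup₂_le fun _ hj => horth hj.symm)

lemma nondegenerateOn_orthogonalBilin_inf (hB : IsHermForm A τ ε E B) {P N : Submodule A E}
    (hN : NondegenerateOn B N) (hPN : P ≤ N)
    (hP : Codisjoint P (P.orthogonalBilin hB.toSesqForm)) :
    NondegenerateOn B (P.orthogonalBilin hB.toSesqForm ⊓ N) := by
  intro u hu hu'
  refine hN u hu.2 fun w hw => ?_
  rw [← top_inf_eq N, ← hP.eq_top, sup_inf_assoc_of_le _ hPN] at hw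
  obtain ⟨p, hp, q, hq, rfl⟩ := Submodule.mem_sup.mp hw
  rw [hB.2.1, hB.eq_zero_comm.mpr (by simpa using hu.1 p hp), hu' q hq, add_zero]

end Ring

section Algebra

variable {k : Type*} {A E F : Type} [Field k] [CommRing A] [Algebra k A]
  [AddCommGroup E] [Module A E] [Module k E] [IsScalarTower k A E]
  [FunLike F A A] [AlgHomClass F k A A] {τ : F} {ε : A} {B : E → E → A}

def toBilinForm (hB : IsHermForm A τ ε E B) (l : Dual k A) : LinearMap.BilinForm k E :=
  LinearMap.mk₂ k (fun u v => l (B u v))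
    (fun u u' v => by rw [hB.1, map_add])
    (fun c u v => by rw [← algebraMap_smul A c u, hB.2.2.1, ← Algebra.smul_def, map_smul])
    (fun u v v' => by rw [hB.2.1, map_add])
    (fun c u v => by
      rw [← algebraMap_smul A c v, hB.map_smul_right, AlgHomClass.commutes, ← Algebra.smul_def,
        map_smul])

lemma orthogonal_toBilinForm (hB : IsHermForm A τ ε E B) {l : Dual k A}
    (hl : IsFrobeniusFunctional l) (N : Submodule A E) :
    (hB.toBilinForm l).orthogonal (N.restrictScalars k) =
      (N.orthogonalBilin hB.toSesqForm).restrictScalars k := by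
  ext v
  simp only [LinearMap.BilinForm.mem_orthogonal_iff, Submodule.restrictScalars_mem,
    Submodule.mem_orthogonalBilin_iff, toSesqForm_apply]
  refine ⟨fun h n hn => hl _ fun a => ?_, fun h n hn => ?_⟩
  · rw [← hB.2.2.1]
    exact h _ (N.smul_mem a hn)
  · show l (B n v) = 0
    rw [h n hn, map_zero]

lemma isCompl_orthogonalBilin [FiniteDimensional k E] (hB : IsHermForm A τ ε E B)
    {l : Dual k A} (hl : IsFrobeniusFunctional l) {N : Submodule A E}
    (hN : NondegenerateOn B N) : IsCompl N (N.orthogonalBilin hB.toSesqForm) := by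
  rw [← Submodule.isCompl_restrictScalars_iff (S := k), ← hB.orthogonal_toBilinForm hl,
    Submodule.isCompl_iff_disjoint]
  · rw [hB.orthogonal_toBilinForm hl, Submodule.disjoint_restrictScalars_iff]
    exact hB.disjoint_orthogonalBilin hN
  · rw [LinearMap.BilinForm.finrank_add_finrank_orthogonal']
    exact Nat.le_add_right _ _

theorem exists_finset_minimal_pairwise_orthogonal [FiniteDimensional k E]
    (hB : IsHermForm A τ ε E B) {l : Dual k A} (hl : IsFrobeniusFunctional l)
    (N : Submodule A E) (hN : NondegenerateOn B N) :
    ∃ S : Finset (Submodule A E),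
      (∀ P ∈ S, Minimal (fun Q => Q ≠ ⊥ ∧ NondegenerateOn B Q) P) ∧
      (S : Set (Submodule A E)).Pairwise (fun P Q => Q ≤ P.orthogonalBilin hB.toSesqForm) ∧
      S.sup id = N := by
  classical
  have : IsArtinian A E := isArtinian_of_tower k inferInstance
  induction N using WellFoundedLT.induction with | _ N ih => ?_
  rcases eq_or_ne N ⊥ with rfl | hN0
  · exact ⟨∅, by simp, by simp, rfl⟩
  obtain ⟨P, hPN, hP⟩ :=
    exists_minimal_le_of_wellFoundedLT (fun Q => Q ≠ ⊥ ∧ NondegenerateOn B Q) N ⟨hN0, hN⟩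
  have hPcompl := hB.isCompl_orthogonalBilin hl hP.prop.2
  set N' := P.orthogonalBilin hB.toSesqForm ⊓ N
  have hN' : P ⊔ N' = N := by
    rw [← sup_inf_assoc_of_le _ hPN, hPcompl.sup_eq_top, top_inf_eq]
  have hN'N : N' < N := inf_le_right.lt_of_ne fun h =>
    hP.prop.1 (hPcompl.disjoint.eq_bot_of_le ((hPN.trans h.ge).trans inf_le_left))
  obtain ⟨S, hSmin, hSorth, hSsup⟩ :=
    ih N' hN'N (hB.nondegenerateOn_orthogonalBilin_inf hN hPN hPcompl.codisjoint)
  refine ⟨insert P S, ?_, ?_, ?_⟩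
  · exact Finset.forall_mem_insert _ _ _ |>.mpr ⟨hP, hSmin⟩
  · have hSP (Q) (hQ : Q ∈ S) : Q ≤ P.orthogonalBilin hB.toSesqForm :=
      (hSsup ▸ Finset.le_sup (f := id) hQ).trans inf_le_left
    rw [Finset.coe_insert, Set.pairwise_insert]
    exact ⟨hSorth, fun Q hQ _ => ⟨hSP Q hQ, hB.le_orthogonalBilin_comm.mp (hSP Q hQ)⟩⟩
  · rw [Finset.sup_insert, hSsup, id, hN']

end Algebra

end IsHermForm

theorem hermitian_module_orthogonal_decomposition_general {k A : Type} [Field k]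
    [CommRing A] [Algebra k A] [FiniteDimensional k A] [IsSemisimpleRing A]
    (τ : A ≃ₐ[k] A) (ε : A)
    (E : Type) [AddCommGroup E] [Module A E] [Module.Finite A E]
    (B : E → E → A) (hherm : IsHermForm A τ ε E B) :
    ∃ (r : ℕ) (N : Fin r → Submodule A E),
      DirectSum.IsInternal N ∧
      (∀ i j, i ≠ j → ∀ u ∈ N i, ∀ v ∈ N j, B u v = 0) ∧
      (∀ i, N i ≠ ⊥ ∧
        (∀ u ∈ N i, (∀ v ∈ N i, B u v = 0) → u = 0) ∧
        (∀ P : Submodule A E, P ≤ N i →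
          (∀ u ∈ P, (∀ v ∈ P, B u v = 0) → u = 0) → P = ⊥ ∨ P = N i)) := by
  obtain ⟨l, hl⟩ := IsSemisimpleRing.exists_isFrobeniusFunctional k A
  let : Module k E := Module.compHom E (algebraMap k A)
  have : IsScalarTower k A E := IsScalarTower.of_algebraMap_smul fun _ _ => rfl
  have : FiniteDimensional k E := Module.Finite.trans A E
  obtain ⟨S, hmin, horth, hsup⟩ := hherm.exists_finset_minimal_pairwise_orthogonal hl ⊤
    fun u _ hu => hherm.2.2.2.2 u fun v => hu v Submodule.mem_top
  set N : Fin S.card → Submodule A E := fun i => S.equivFin.symm i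
  have hNmin (i) : Minimal (fun Q => Q ≠ ⊥ ∧ NondegenerateOn B Q) (N i) :=
    hmin _ (S.equivFin.symm i).2
  have hNorth : Pairwise fun i j => N j ≤ (N i).orthogonalBilin hherm.toSesqForm :=
    fun i j hij => horth (S.equivFin.symm i).2 (S.equivFin.symm j).2
      (Subtype.coe_injective.ne (S.equivFin.symm.injective.ne hij))
  refine ⟨S.card, N, ?_, fun i j hij u hu v hv => hNorth hij hv u hu, fun i => ?_⟩
  · rw [DirectSum.isInternal_submodule_iff_iSupIndep_and_iSup_eq_top]
    refine ⟨hherm.iSupIndep_of_pairwise_le_orthogonalBilin (fun i => (hNmin i).prop.2) hNorth,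
      ?_⟩
    rw [← hsup, Finset.sup_id_eq_sSup, sSup_eq_iSup']
    exact S.equivFin.symm.iSup_comp (g := Subtype.val)
  · exact ⟨(hNmin i).prop.1, (hNmin i).prop.2, fun P hPle hP =>
      or_iff_not_imp_left.mpr fun hP0 => (hNmin i).eq_of_le ⟨hP0, hP⟩ hPle⟩

/-- Every `ε`-Hermitian `A`-module is (isomorphic to) an orthogonal direct sum of simple
`ε`-Hermitian `A`-modules: `E` decomposes as an internal direct sum of pairwise
orthogonal non-degenerate submodules, each of which is simple as an `ε`-Hermitian
`A`-module. -/
theorem hermitian_module_orthogonal_decomposition {k A : Type} [Field k] [CharZero k]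
    [CommRing A] [Algebra k A] [FiniteDimensional k A] [IsSemisimpleRing A]
    (τ : A ≃ₐ[k] A) (hτ : ∀ a, τ (τ a) = a)
    (ε : A) (hε : ε = 1 ∨ ε = -1)
    (E : Type) [AddCommGroup E] [Module A E] [Module.Finite A E]
    (B : E → E → A) (hherm : IsHermForm A τ ε E B) :
    ∃ (r : ℕ) (N : Fin r → Submodule A E),
      DirectSum.IsInternal N ∧
      (∀ i j, i ≠ j → ∀ u ∈ N i, ∀ v ∈ N j, B u v = 0) ∧
      (∀ i, N i ≠ ⊥ ∧
        (∀ u ∈ N i, (∀ v ∈ N i, B u v = 0) → u = 0) ∧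
        (∀ P : Submodule A E, P ≤ N i →
          (∀ u ∈ P, (∀ v ∈ P, B u v = 0) → u = 0) → P = ⊥ ∨ P = N i)) :=
  hermitian_module_orthogonal_decomposition_general τ ε E B hherm
end

section
/- Let E be an ε-Hermitian A-module, s ∈ End_A(E) semisimple and normal, and A_s the involutive subalgebra generated by s, s^τ, and A. Define E_s := E as an A_s-module, with A_s-valued form ⟨·,·⟩_{E_s} determined by tr_{A_s/k}(a ⟨u,v⟩_{E_s}) = tr_{A/k}(⟨a u, v⟩_E) for all a ∈ A_s, u, v ∈ E. Then such a form exists, is unique, and makes E_s an ε-Hermitian A_s-module (in particular the form is non-degenerate, (ε,τ)-Hermitian symmetric, and A_s-linear in the first variable). -/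
open Polynomial
open scoped IsMulCommutative

section TraceForm

variable (k : Type*) {S : Type*} [Field k] [CommRing S] [Algebra k S]

theorem IsSemisimpleRing.traceForm_nondegenerate [CharZero k] [FiniteDimensional k S]
    [IsSemisimpleRing S] : (Algebra.traceForm k S).Nondegenerate := by
  refine .ofSeparatingLeft fun x hx => ?_
  obtain ⟨e, he, hspan⟩ := IsSemisimpleRing.ideal_eq_span_idempotent (Ideal.span {x})
  obtain ⟨y, rfl⟩ := Ideal.mem_span_singleton'.mp
    (hspan.symm ▸ Ideal.mem_span_singleton_self e : e ∈ Ideal.span {x})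
  -- `y * x` is an idempotent generator of `(x)`, and an idempotent of trace zero vanishes.
  have hyx : y * x = 0 := by
    have hmul := LinearMap.IsIdempotentElem.eq_zero_of_trace_eq_zero
      (he.map (Algebra.lmul k S)) (by simpa [mul_comm, Algebra.trace_apply] using hx y)
    simpa using congr($hmul 1)
  simpa [hyx] using (hspan ▸ Ideal.mem_span_singleton_self x : x ∈ Ideal.span {y * x})

variable {k}

theorem Algebra.eq_of_forall_trace_mul_eq (hS : (Algebra.traceForm k S).Nondegenerate)
    {b b' : S} (h : ∀ a, Algebra.trace k S (a * b) = Algebra.trace k S (a * b')) : b = b' :=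
  sub_eq_zero.mp <| hS.2 _ fun a => by simp [Algebra.traceForm_apply, mul_sub, h a]

theorem Algebra.exists_forall_trace_mul_eq [FiniteDimensional k S]
    (hS : (Algebra.traceForm k S).Nondegenerate) (f : Module.Dual k S) :
    ∃ b, ∀ a, Algebra.trace k S (a * b) = f a :=
  ⟨((Algebra.traceForm k S).toDual hS).symm f, fun a => by
    rw [mul_comm, ← Algebra.traceForm_apply, ← LinearMap.BilinForm.toDual_def hS,
      LinearEquiv.apply_symm_apply]⟩

end TraceForm

theorem Algebra.isMulCommutative_adjoin_pair (R : Type*) {A : Type*} [CommSemiring R]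
    [Semiring A] [Algebra R A] {x y : A} (h : Commute x y) :
    IsMulCommutative (Algebra.adjoin R {x, y}) :=
  Algebra.isMulCommutative_adjoin R <| by
    rintro _ (rfl | rfl) _ (rfl | rfl) <;> first | rfl | exact h | exact h.symm

theorem Module.End.isSemisimple_algHom_apply {k R M : Type*} [Field k] [Ring R] [Algebra k R]
    [FiniteDimensional k R] [IsReduced R] [AddCommGroup M] [Module k M]
    (f : R →ₐ[k] Module.End k M) (a : R) : (f a).IsSemisimple :=
  isSemisimple_of_squarefree_aeval_eq_zero
    ((minpoly.isRadical k a).squarefree (minpoly.ne_zero (.of_finite k a)))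
    (by rw [aeval_algHom_apply, minpoly.aeval, map_zero])

def Module.End.restrictScalarsAlgHom (k A E : Type*) [CommSemiring k] [Semiring A]
    [Algebra k A] [AddCommMonoid E] [Module A E] [Module k E] [IsScalarTower k A E] :
    Module.End A E →ₐ[k] Module.End k E where
  toFun f := f.restrictScalars k
  map_one' := rfl
  map_mul' _ _ := rfl
  map_zero' := rfl
  map_add' _ _ := rfl
  commutes' _ := rfl

section Adjoint

variable {k A E : Type} [CommRing k] [CommRing A] [Algebra k A] [AddCommGroup E] [Module A E]
  {τ : A ≃ₐ[k] A} {ε : A} {B : E → E → A}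

namespace IsHermForm

variable (hB : IsHermForm A τ ε E B)
include hB

theorem smul_left_of_tower [Module k E] [IsScalarTower k A E] (c : k) (u v : E) :
    B (c • u) v = c • B u v := by
  rw [← algebraMap_smul A c u, hB.2.2.1, Algebra.smul_def]

theorem smul_right_s11 (a : A) (u v : E) : B u (a • v) = τ a * B u v := by
  obtain ⟨-, -, hsmul, hsymm, -⟩ := hB
  rw [hsymm u, hsmul, map_mul, mul_left_comm, ← hsymm]

theorem eq_of_forall_left {w w' : E} (h : ∀ u, B u w = B u w') : w = w' := by
  obtain ⟨-, hadd, -, hsymm, hnd⟩ := hB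
  have hsub (u : E) : B u (w - w') = 0 :=
    (map_sub (AddMonoidHom.mk' (B u) (hadd u)) w w').trans (sub_eq_zero.mpr (h u))
  exact sub_eq_zero.mp <| hnd _ fun u => by rw [hsymm, hsub, map_zero, mul_zero]

end IsHermForm

def IsAdjoint (B : E → E → A) (adj : Module.End A E → Module.End A E) : Prop :=
  ∀ x u v, B (x u) v = B u (adj x v)

namespace IsAdjoint

variable {adj : Module.End A E → Module.End A E} (hB : IsHermForm A τ ε E B)
  (hadj : IsAdjoint B adj)
include hB hadj

theorem eq_of_forall {x y : Module.End A E} (h : ∀ u v, B (x u) v = B u (y v)) : adj x = y :=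
  LinearMap.ext fun v => hB.eq_of_forall_left fun u => by rw [← hadj, h]

theorem adj_add (x y : Module.End A E) : adj (x + y) = adj x + adj y :=
  hadj.eq_of_forall hB fun u v => by
    rw [LinearMap.add_apply, LinearMap.add_apply, hB.1, hB.2.1, hadj, hadj]

theorem adj_mul (x y : Module.End A E) : adj (x * y) = adj y * adj x :=
  hadj.eq_of_forall hB fun u v => by rw [Module.End.mul_apply, hadj, hadj]; rfl

theorem adj_zero : adj 0 = 0 := by
  simpa using hadj.adj_add hB 0 0

theorem adj_one : adj 1 = 1 :=
  hadj.eq_of_forall hB fun _ _ => rfl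

theorem adj_smul [Module k E] [IsScalarTower k A E] (c : k) (x : Module.End A E) :
    adj (c • x) = c • adj x :=
  hadj.eq_of_forall hB fun u v => by
    rw [LinearMap.smul_apply, LinearMap.smul_apply, hB.smul_left_of_tower, hadj,
      ← algebraMap_smul A c (adj x v), hB.smul_right_s11, AlgEquiv.commutes, Algebra.smul_def]

theorem adj_pow (x : Module.End A E) (n : ℕ) : adj (x ^ n) = adj x ^ n := by
  induction n with
  | zero => exact hadj.adj_one hB
  | succ n ih => rw [pow_succ, hadj.adj_mul hB, ih, pow_succ']

theorem adj_aeval [Module k E] [IsScalarTower k A E] (x : Module.End A E) (p : k[X]) :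
    adj (aeval x p) = aeval (adj x) p := by
  induction p using Polynomial.induction_on' with
  | add p q hp hq => rw [map_add, hadj.adj_add hB, hp, hq, map_add]
  | monomial n c =>
    rw [aeval_monomial, aeval_monomial, ← Algebra.smul_def, ← Algebra.smul_def,
      hadj.adj_smul hB, hadj.adj_pow hB]

theorem adj_algebraMap (hτ : ∀ a, τ (τ a) = a) (a : A) :
    adj (algebraMap A (Module.End A E) a) = algebraMap A (Module.End A E) (τ a) :=
  hadj.eq_of_forall hB fun u v => by
    rw [Module.algebraMap_end_apply, Module.algebraMap_end_apply, hB.2.2.1, hB.smul_right_s11, hτ]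

theorem adj_adj (hτ : ∀ a, τ (τ a) = a) (hε : ε = 1 ∨ ε = -1) (x : Module.End A E) :
    adj (adj x) = x :=
  hadj.eq_of_forall hB fun u v => by
    rw [hB.2.2.2.1, ← hadj, hB.2.2.2.1 (x v), map_mul, hτ, ← mul_assoc]
    rcases hε with rfl | rfl <;> simp

end IsAdjoint

end Adjoint

theorem IsAdjoint.isSemisimple_adj {k A E : Type} [Field k] [CommRing A] [Algebra k A]
    [AddCommGroup E] [Module A E] [Module k E] [IsScalarTower k A E] [FiniteDimensional k E]
    {τ : A ≃ₐ[k] A} {ε : A} {B : E → E → A} {adj : Module.End A E → Module.End A E}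
    (hB : IsHermForm A τ ε E B) (hadj : IsAdjoint B adj) {s : Module.End A E}
    (hs : Module.End.IsSemisimple (s.restrictScalars k)) :
    Module.End.IsSemisimple ((adj s).restrictScalars k) := by
  let ρ := Module.End.restrictScalarsAlgHom k A E
  have hroot : aeval s (minpoly k (ρ s)) = 0 :=
    LinearMap.restrictScalars_injective k <|
      (aeval_algHom_apply ρ s _).symm.trans (minpoly.aeval k _)
  refine Module.End.isSemisimple_of_squarefree_aeval_eq_zero hs.minpoly_squarefree ?_
  change aeval (ρ (adj s)) (minpoly k (ρ s)) = 0
  rw [aeval_algHom_apply, ← hadj.adj_aeval hB, hroot, hadj.adj_zero hB, map_zero]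

section Semisimple

variable {k A E : Type*} [Field k] [CommRing A] [Algebra k A] [AddCommGroup E] [Module A E]
  [Module k E] [IsScalarTower k A E] [FiniteDimensional k E]

theorem isSemisimple_restrictScalars_of_mem_adjoin [PerfectField k] [FiniteDimensional k A]
    [IsReduced A] {T : Set (Module.End A E)} [IsMulCommutative (Algebra.adjoin A T)]
    (hT : ∀ x ∈ T, Module.End.IsSemisimple (x.restrictScalars k)) (x : Algebra.adjoin A T) :
    Module.End.IsSemisimple ((x : Module.End A E).restrictScalars k) := by
  let ρ := Module.End.restrictScalarsAlgHom k A E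
  have hcomm : ∀ y ∈ Algebra.adjoin A T, ∀ z ∈ Algebra.adjoin A T, Commute (ρ y) (ρ z) :=
    fun y hy z hz => Commute.map
      (congrArg Subtype.val (mul_comm (⟨y, hy⟩ : Algebra.adjoin A T) ⟨z, hz⟩)) ρ
  obtain ⟨x, hx⟩ := x
  change (ρ x).IsSemisimple
  induction hx using Algebra.adjoin_induction with
  | mem x hx => exact hT x hx
  | algebraMap a =>
    exact Module.End.isSemisimple_algHom_apply (ρ.comp (IsScalarTower.toAlgHom k A _)) a
  | add y z hy hz ihy ihz => rw [map_add]; exact .add_of_commute (hcomm y hy z hz) ihy ihz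
  | mul y z hy hz ihy ihz => rw [map_mul]; exact .mul_of_commute (hcomm y hy z hz) ihy ihz

instance Subalgebra.finiteDimensional_of_end (As : Subalgebra A (Module.End A E)) :
    FiniteDimensional k As :=
  have : FiniteDimensional k (Module.End A E) :=
    .of_injective (LinearMap.restrictScalarsₗ k A E E k) (LinearMap.restrictScalars_injective k)
  .of_injective ((As.val.restrictScalars k).toLinearMap) Subtype.val_injective

theorem Subalgebra.traceForm_nondegenerate_of_isSemisimple [CharZero k]
    (As : Subalgebra A (Module.End A E)) [IsMulCommutative As]
    (hAs : ∀ x : As, Module.End.IsSemisimple ((x : Module.End A E).restrictScalars k)) :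
    (Algebra.traceForm k As).Nondegenerate := by
  have : IsReduced As := ⟨fun x hx => Subtype.ext <| LinearMap.restrictScalars_injective k <|
    Module.End.eq_zero_of_isNilpotent_isSemisimple
      (hx.map ((Module.End.restrictScalarsAlgHom k A E).comp (As.val.restrictScalars k))) (hAs x)⟩
  have : IsArtinianRing As := .of_finite k As
  have := IsArtinianRing.isSemisimpleRing_of_isReduced As
  exact IsSemisimpleRing.traceForm_nondegenerate k

end Semisimple

section Descent

variable {k A E : Type} [Field k] [CommRing A] [Algebra k A] [AddCommGroup E] [Module A E]
  [Module k E] [IsScalarTower k A E] {τ : A ≃ₐ[k] A} {ε : A} {B : E → E → A}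
  {adj : Module.End A E → Module.End A E} {As : Subalgebra A (Module.End A E)}
  [IsMulCommutative As]

variable (As) in
def IsAdjoint.algEquivOfStable (hB : IsHermForm A τ ε E B) (hadj : IsAdjoint B adj)
    (hτ : ∀ a, τ (τ a) = a) (hε : ε = 1 ∨ ε = -1) (hstable : ∀ x ∈ As, adj x ∈ As) :
    As ≃ₐ[k] As where
  toFun x := ⟨adj x, hstable x x.2⟩
  invFun x := ⟨adj x, hstable x x.2⟩
  left_inv x := Subtype.ext (hadj.adj_adj hB hτ hε x)
  right_inv x := Subtype.ext (hadj.adj_adj hB hτ hε x)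
  map_mul' x y := Subtype.ext <| (hadj.adj_mul hB x y).trans <|
    congrArg Subtype.val (mul_comm (⟨adj y, hstable y y.2⟩ : As) ⟨adj x, hstable x x.2⟩)
  map_add' x y := Subtype.ext (hadj.adj_add hB x y)
  commutes' c := Subtype.ext <| by
    simp [IsScalarTower.algebraMap_apply k A (Module.End A E), hadj.adj_algebraMap hB hτ]

variable (k As) in
def IsDescentForm (B : E → E → A) (Bs : E → E → As) : Prop :=
  ∀ (a : As) (u v : E),
    Algebra.trace k As (a * Bs u v) = Algebra.trace k A (B ((a : Module.End A E) u) v)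

theorem existsUnique_isDescentForm [FiniteDimensional k As]
    (hAs : (Algebra.traceForm k As).Nondegenerate) (hB : IsHermForm A τ ε E B) :
    ∃! Bs : E → E → As, IsDescentForm k As B Bs := by
  let F (u v : E) : Module.Dual k As := (Algebra.trace k A).comp
    ({ toFun a := B ((a : Module.End A E) u) v
       map_add' a b := hB.1 _ _ v
       map_smul' c a := hB.smul_left_of_tower c ((a : Module.End A E) u) v } : As →ₗ[k] A)
  choose Bs hBs using fun u v => Algebra.exists_forall_trace_mul_eq hAs (F u v)
  exact ⟨Bs, fun a u v => hBs u v a, fun Bs' h' => funext₂ fun u v =>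
    Algebra.eq_of_forall_trace_mul_eq hAs fun a => (h' a u v).trans (hBs u v a).symm⟩

namespace IsDescentForm

variable {Bs : E → E → As} (h : IsDescentForm k As B Bs)
include h

theorem add_left (hAs : (Algebra.traceForm k As).Nondegenerate)
    (hB : IsHermForm A τ ε E B) (u u' v : E) : Bs (u + u') v = Bs u v + Bs u' v :=
  Algebra.eq_of_forall_trace_mul_eq hAs fun a => by
    simp only [mul_add, map_add, h a, hB.1]

theorem add_right (hAs : (Algebra.traceForm k As).Nondegenerate)
    (hB : IsHermForm A τ ε E B) (u v v' : E) : Bs u (v + v') = Bs u v + Bs u v' :=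
  Algebra.eq_of_forall_trace_mul_eq hAs fun a => by
    simp only [mul_add, map_add, h a, hB.2.1]

theorem smul_left (hAs : (Algebra.traceForm k As).Nondegenerate) (x : As) (u v : E) :
    Bs ((x : Module.End A E) u) v = x * Bs u v :=
  Algebra.eq_of_forall_trace_mul_eq hAs fun a => by rw [h, ← mul_assoc, h]; rfl

theorem coe_eq_algebraMap_mul_adj (hAs : (Algebra.traceForm k As).Nondegenerate)
    (hB : IsHermForm A τ ε E B) (hadj : IsAdjoint B adj)
    (hτ : ∀ a, τ (τ a) = a) (hε : ε = 1 ∨ ε = -1) (hstable : ∀ x ∈ As, adj x ∈ As) (u v : E) :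
    (Bs u v : Module.End A E) = algebraMap A (Module.End A E) ε * adj (Bs v u) := by
  let σ := hadj.algEquivOfStable As hB hτ hε hstable
  have hτε : τ ε = ε := by rcases hε with rfl | rfl <;> simp
  have hσε : σ (algebraMap A As ε) = algebraMap A As ε :=
    Subtype.ext ((hadj.adj_algebraMap hB hτ ε).trans (by rw [hτε]; rfl))
  have hσσ (x : As) : σ (σ x) = x := Subtype.ext (hadj.adj_adj hB hτ hε x)
  suffices Bs u v = algebraMap A As ε * σ (Bs v u) from congrArg Subtype.val this
  refine Algebra.eq_of_forall_trace_mul_eq hAs fun a => ?_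
  have hv : ((σ a * algebraMap A As ε : As) : Module.End A E) v = ε • adj a v :=
    map_smul (adj a) ε v
  calc Algebra.trace k As (a * Bs u v)
      = Algebra.trace k A (τ (B (((σ a * algebraMap A As ε : As) : Module.End A E) v) u)) := by
        rw [h, hadj, hB.2.2.2.1, hv, hB.2.2.1, map_mul τ, hτε]
    _ = Algebra.trace k As (σ (σ a * algebraMap A As ε * Bs v u)) := by
        rw [Algebra.trace_eq_of_algEquiv, Algebra.trace_eq_of_algEquiv, h]
    _ = Algebra.trace k As (a * (algebraMap A As ε * σ (Bs v u))) := by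
        rw [map_mul σ, map_mul σ, hσε, hσσ, mul_assoc]

theorem eq_zero_of_forall_eq_zero (hA : (Algebra.traceForm k A).Nondegenerate)
    (hB : IsHermForm A τ ε E B) {u : E} (hu : ∀ v, Bs u v = 0) : u = 0 :=
  hB.2.2.2.2 u fun v => hA.2 _ fun c => by
    have hc := h (algebraMap A As c) u v
    rw [hu, mul_zero, map_zero] at hc
    rw [Algebra.traceForm_apply, ← hB.2.2.1]
    exact hc.symm

end IsDescentForm

end Descent

/-- Harish-Chandra descent of the form: let `E` be an `ε`-Hermitian `A`-module, `adj`
the adjoint involution of `End_A(E)`, `s` a semisimple normal element, and `A_s` the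
subalgebra generated by `s`, `adj s` and `A`.  Then there is a unique map
`B_s : E × E → A_s` satisfying `tr_{A_s/k}(a ⟨u,v⟩_{E_s}) = tr_{A/k}(⟨a u, v⟩_E)`, and it
makes `E_s := E` an `ε`-Hermitian `A_s`-module: it is biadditive, `A_s`-linear in the
first variable, `(ε, adj)`-Hermitian symmetric, and non-degenerate. -/
theorem descent_hermitian_form {k A : Type} [Field k] [CharZero k]
    [CommRing A] [Algebra k A] [FiniteDimensional k A] [IsSemisimpleRing A]
    (τ : A ≃ₐ[k] A) (hτ : ∀ a, τ (τ a) = a)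
    (ε : A) (hε : ε = 1 ∨ ε = -1)
    (E : Type) [AddCommGroup E] [Module A E] [Module.Finite A E]
    [Module k E] [IsScalarTower k A E]
    (B : E → E → A) (hherm : IsHermForm A τ ε E B)
    (adj : Module.End A E → Module.End A E)
    (hadj : ∀ (x : Module.End A E) (u v : E), B (x u) v = B u (adj x v))
    (s : Module.End A E)
    (hss : Module.End.IsSemisimple (s.restrictScalars k))
    (hnormal : s * adj s = adj s * s)
    (As : Subalgebra A (Module.End A E))
    (hAs : As = Algebra.adjoin A ({s, adj s} : Set (Module.End A E)))
    (hstable : ∀ x ∈ As, adj x ∈ As) :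
    (∃! Bs : E → E → As, ∀ (a : As) (u v : E),
        LinearMap.trace k As (LinearMap.mulLeft k ((a * Bs u v : As))) = Algebra.trace k A (B ((a : Module.End A E) u) v)) ∧
    (∀ Bs : E → E → As,
      (∀ (a : As) (u v : E),
        LinearMap.trace k As (LinearMap.mulLeft k ((a * Bs u v : As))) = Algebra.trace k A (B ((a : Module.End A E) u) v)) →
      (∀ u u' v, Bs (u + u') v = Bs u v + Bs u' v) ∧
      (∀ u v v', Bs u (v + v') = Bs u v + Bs u v') ∧
      (∀ (a : As) (u v : E), Bs ((a : Module.End A E) u) v = a * Bs u v) ∧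
      (∀ u v : E, ((Bs u v : Module.End A E)) =
        algebraMap A (Module.End A E) ε * adj (Bs v u)) ∧
      (∀ u : E, (∀ v : E, Bs u v = 0) → u = 0)) := by
  subst hAs
  have := Algebra.isMulCommutative_adjoin_pair A hnormal
  have : Module.Finite k E := .trans A E
  have hAs := Subalgebra.traceForm_nondegenerate_of_isSemisimple _ <|
    isSemisimple_restrictScalars_of_mem_adjoin (k := k) (T := {s, adj s}) <| by
      rintro _ (rfl | rfl)
      exacts [hss, IsAdjoint.isSemisimple_adj hherm hadj hss]
  refine ⟨existsUnique_isDescentForm hAs hherm, fun Bs h => ?_⟩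
  replace h : IsDescentForm k _ B Bs := h
  exact ⟨h.add_left hAs hherm, h.add_right hAs hherm, h.smul_left hAs,
    h.coe_eq_algebraMap_mul_adj hAs hherm hadj hτ hε hstable,
    fun u => h.eq_zero_of_forall_eq_zero (IsSemisimpleRing.traceForm_nondegenerate k) hherm⟩
end

section
/- Let E be an ε-Hermitian A-module and define the MVW-extension Ŭ(E) as the subgroup of GL(E_k) × {±1} consisting of pairs (g, δ) such that either δ = 1 and ⟨gu, gv⟩ = ⟨u, v⟩ for all u, v, or δ = -1 and ⟨gu, gv⟩ = ⟨v, u⟩ for all u, v. Then the projection Ŭ(E) → {±1} is surjective; equivalently, there exists a short exact sequence 1 → U(E) → Ŭ(E) → {±1} → 1. -/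
set_option linter.unusedSectionVars false

namespace MVWProof

def Good (k : Type) [Field k] {A : Type} [CommRing A] [Algebra k A] {E : Type}
    [AddCommGroup E] [Module A E] [Module k E] (B : E → E → A) (N : Submodule A E) : Prop :=
  ∃ σ : E →ₗ[k] E, (∀ x ∈ N, σ x ∈ N) ∧ (∀ x ∈ N, σ x = 0 → x = 0) ∧
    ∀ x ∈ N, ∀ y ∈ N, B (σ x) (σ y) = B y x

def Nondeg {A E : Type} [CommRing A] [AddCommGroup E] [Module A E]
    (B : E → E → A) (N : Submodule A E) : Prop :=
  ∀ x ∈ N, (∀ y ∈ N, B x y = 0) → x = 0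

variable {k A : Type} [Field k] [CharZero k]
    [CommRing A] [Algebra k A] [FiniteDimensional k A] [IsSemisimpleRing A]
    {E : Type} [AddCommGroup E] [Module A E] [Module.Finite A E]
    [Module k E] [IsScalarTower k A E]
    (τ : A ≃ₐ[k] A) (hτ : ∀ a, τ (τ a) = a)
    (ε : A) (hε : ε = 1 ∨ ε = -1)
    (B : E → E → A) (hherm : IsHermForm A τ ε E B)

include hε in
lemma hε2 : ε * ε = 1 := by rcases hε with h | h <;> subst h <;> ring

include hherm in
lemma BsmulR (a : A) (x y : E) : B x (a • y) = τ a * B x y := by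
  obtain ⟨h1, h2, h3, h4, h5⟩ := hherm
  rw [h4 x (a • y), h3, map_mul, h4 x y]; ring

include hherm in
lemma BzeroL (y : E) : B 0 y = 0 := by
  have h := hherm.1 0 0 y
  rw [add_zero] at h
  linear_combination -h

include hherm in
lemma BzeroR (x : E) : B x 0 = 0 := by
  have h := hherm.2.1 x 0 0
  rw [add_zero] at h
  linear_combination -h

include hherm in
lemma BsubL (x y z : E) : B (x - y) z = B x z - B y z := by
  have h := hherm.1 (x - y) y z
  rw [sub_add_cancel] at h
  linear_combination -h

include hherm in
lemma Bsym' {x y : E} (h : B x y = 0) : B y x = 0 := by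
  rw [hherm.2.2.2.1 y x, h, map_zero, mul_zero]

include hherm in
lemma BksmulL (c : k) (x y : E) : B (c • x) y = algebraMap k A c * B x y := by
  rw [← algebraMap_smul A c x, hherm.2.2.1]

include hherm in
lemma Bexpand (a b c d : A) (p q r s : E) :
    B (a • p + b • q) (c • r + d • s) =
      a * τ c * B p r + a * τ d * B p s + b * τ c * B q r + b * τ d * B q s := by
  have hR := BsmulR (τ := τ) (hherm := hherm)
  simp only [hherm.1, hherm.2.1, hherm.2.2.1, hR]
  ring

include hherm in
lemma step (N : Submodule A E) (hnd : Nondeg B N)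
    (u v : E) (hu : u ∈ N) (hv : v ∈ N)
    (sF pF : E →ₗ[k] E)
    (hspan : ∀ x : E, ∃ a b : A, pF x = a • u + b • v ∧ sF x = τ a • v + τ b • u)
    (hproj : ∀ x : E, B (x - pF x) u = 0 ∧ B (x - pF x) v = 0)
    (hrev : ∀ x y : E, B (sF x) (sF y) = B (pF y) (pF x))
    (hker2 : ∀ x : E, B (sF x) u = 0 → B (sF x) v = 0 → sF x = 0 ∧ pF x = 0)
    (huN' : ¬(B u u = 0 ∧ B u v = 0))
    (IH : ∀ N' : Submodule A E, N' < N → Nondeg B N' → Good k B N') :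
    Good k B N := by
  have hR := BsmulR (τ := τ) (hherm := hherm)
  have hz := BzeroL (τ := τ) (hherm := hherm)
  -- the orthogonal complement of the span of u, v inside N
  let N' : Submodule A E :=
    { carrier := {x | x ∈ N ∧ B x u = 0 ∧ B x v = 0}
      add_mem' := by
        rintro a b ⟨haN, hau, hav⟩ ⟨hbN, hbu, hbv⟩
        exact ⟨N.add_mem haN hbN, by rw [hherm.1, hau, hbu, add_zero],
          by rw [hherm.1, hav, hbv, add_zero]⟩
      zero_mem' := ⟨N.zero_mem, hz u, hz v⟩
      smul_mem' := by
        rintro c x ⟨hxN, hxu, hxv⟩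
        exact ⟨N.smul_mem c hxN, by rw [hherm.2.2.1, hxu, mul_zero],
          by rw [hherm.2.2.1, hxv, mul_zero]⟩ }
  have memN' : ∀ z : E, z ∈ N' ↔ z ∈ N ∧ B z u = 0 ∧ B z v = 0 := fun z => Iff.rfl
  have hpFN : ∀ x, pF x ∈ N := by
    intro x; obtain ⟨a, b, hp, -⟩ := hspan x
    rw [hp]; exact N.add_mem (N.smul_mem _ hu) (N.smul_mem _ hv)
  have hsFN : ∀ x, sF x ∈ N := by
    intro x; obtain ⟨a, b, -, hs⟩ := hspan x
    rw [hs]; exact N.add_mem (N.smul_mem _ hv) (N.smul_mem _ hu)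
  have hmemN' : ∀ x ∈ N, x - pF x ∈ N' := fun x hx =>
    ⟨N.sub_mem hx (hpFN x), (hproj x).1, (hproj x).2⟩
  have hN'le : N' ≤ N := fun x hx => hx.1
  have hN'lt : N' < N := by
    refine lt_of_le_of_ne hN'le (fun h => huN' ?_)
    have : u ∈ N' := h ▸ hu
    exact ⟨this.2.1, this.2.2⟩
  -- key orthogonality facts
  have key : ∀ (t z : E), B z u = 0 → B z v = 0 →
      B (sF t) z = 0 ∧ B (pF t) z = 0 ∧ B z (sF t) = 0 ∧ B z (pF t) = 0 := by
    intro t z hzu hzv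
    obtain ⟨a, b, hp, hs⟩ := hspan t
    have huz : B u z = 0 := Bsym' (τ := τ) (hherm := hherm) (h := hzu)
    have hvz : B v z = 0 := Bsym' (τ := τ) (hherm := hherm) (h := hzv)
    refine ⟨?_, ?_, ?_, ?_⟩
    · rw [hs, hherm.1, hherm.2.2.1, hherm.2.2.1, huz, hvz]; ring
    · rw [hp, hherm.1, hherm.2.2.1, hherm.2.2.1, huz, hvz]; ring
    · rw [hs, hherm.2.1, hR, hR, hzu, hzv]; ring
    · rw [hp, hherm.2.1, hR, hR, hzu, hzv]; ring
  -- nondegeneracy of N'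
  have hnd' : Nondeg B N' := by
    intro x hx hall
    refine hnd x (hN'le hx) (fun y hy => ?_)
    have h1 : B x (pF y) = 0 := (key y x hx.2.1 hx.2.2).2.2.2
    have h2 : B x (y - pF y) = 0 := hall _ (hmemN' y hy)
    have h3 : pF y + (y - pF y) = y := by abel
    have h4 := hherm.2.1 x (pF y) (y - pF y)
    rw [h3, h1, h2, add_zero] at h4
    exact h4
  obtain ⟨σ', hm1, hm2, hm3⟩ := IH N' hN'lt hnd'
  refine ⟨(sF + σ'.comp (LinearMap.id - pF) : E →ₗ[k] E), ?_, ?_, ?_⟩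
  · intro x hx
    exact N.add_mem (hsFN x) (hN'le (hm1 _ (hmemN' x hx)))
  · intro x hx h0
    have hxb : x - pF x ∈ N' := hmemN' x hx
    have hzb : σ' (x - pF x) ∈ N' := hm1 _ hxb
    have h0' : sF x + σ' (x - pF x) = 0 := h0
    have hBu : B (sF x) u = 0 := by
      have h5 := hherm.1 (sF x) (σ' (x - pF x)) u
      rw [h0', hz, hzb.2.1, add_zero] at h5
      exact h5.symm
    have hBv : B (sF x) v = 0 := by
      have h5 := hherm.1 (sF x) (σ' (x - pF x)) v
      rw [h0', hz, hzb.2.2, add_zero] at h5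
      exact h5.symm
    obtain ⟨hs0, hp0⟩ := hker2 x hBu hBv
    have hσ'0 : σ' (x - pF x) = 0 := by rw [hs0, zero_add] at h0'; exact h0'
    have hx0 : x - pF x = 0 := hm2 _ hxb hσ'0
    rw [sub_eq_zero] at hx0
    rw [hx0, hp0]
  · intro x hx y hy
    have hxb : x - pF x ∈ N' := hmemN' x hx
    have hyb : y - pF y ∈ N' := hmemN' y hy
    have hzx : σ' (x - pF x) ∈ N' := hm1 _ hxb
    have hzy : σ' (y - pF y) ∈ N' := hm1 _ hyb
    have expand : ∀ p q r s : E, B (p + q) (r + s) = B p r + B p s + B q r + B q s := by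
      intro p q r s
      rw [hherm.1, hherm.2.1, hherm.2.1]; ring
    have e0 : ∀ t : E, (sF + σ'.comp (LinearMap.id - pF) : E →ₗ[k] E) t = sF t + σ' (t - pF t) :=
      fun t => rfl
    rw [e0, e0, expand]
    have hyeq : y = pF y + (y - pF y) := by abel
    have hxeq : x = pF x + (x - pF x) := by abel
    have e2 : B y x = B (pF y) (pF x) + B (pF y) (x - pF x) + B (y - pF y) (pF x)
        + B (y - pF y) (x - pF x) := by
      conv_lhs => rw [hyeq, hxeq]
      rw [expand]
    rw [e2]
    rw [hrev x y, hm3 _ hxb _ hyb]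
    rw [(key x (σ' (y - pF y)) hzy.2.1 hzy.2.2).1]
    rw [(key y (σ' (x - pF x)) hzx.2.1 hzx.2.2).2.2.1]
    rw [(key y (x - pF x) hxb.2.1 hxb.2.2).2.1]
    rw [(key x (y - pF y) hyb.2.1 hyb.2.2).2.2.2]


include hτ hε hherm in
lemma stepA (N : Submodule A E) (hnd : Nondeg B N)
    (u : E) (hu : u ∈ N) (f winv : A)
    (hτf : τ f = f) (hfu : f • u = u) (hcw : B u u * winv = f) (hf0 : f ≠ 0)
    (IH : ∀ N' : Submodule A E, N' < N → Nondeg B N' → Good k B N') :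
    Good k B N := by
  have hR := BsmulR (τ := τ) (hherm := hherm)
  have hkL := BksmulL (τ := τ) (hherm := hherm)
  have hBf : ∀ x : E, f * B x u = B x u := by
    intro x
    conv_rhs => rw [← hfu]
    rw [hR, hτf]
  let pF : E →ₗ[k] E :=
    { toFun := fun x => (B x u * winv) • u
      map_add' := by intro x y; rw [hherm.1, add_mul, add_smul]
      map_smul' := by
        intro c x
        dsimp only [RingHom.id_apply]
        rw [hkL, mul_assoc, mul_smul, algebraMap_smul] }
  let sF : E →ₗ[k] E :=
    { toFun := fun x => τ (B x u * winv) • u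
      map_add' := by intro x y; rw [hherm.1, add_mul, map_add, add_smul]
      map_smul' := by
        intro c x
        dsimp only [RingHom.id_apply]
        rw [hkL, mul_assoc, map_mul, AlgEquiv.commutes, mul_smul, algebraMap_smul] }
  have hsub := BsubL (τ := τ) (hherm := hherm)
  refine step (τ := τ) (hherm := hherm) (N := N) (hnd := hnd) (u := u) (v := 0)
    (hu := hu) (hv := N.zero_mem) (sF := sF) (pF := pF) (hspan := ?_) (hproj := ?_)
    (hrev := ?_) (hker2 := ?_) (huN' := ?_) (IH := IH)
  · refine fun x => ⟨B x u * winv, B x u * winv, ?_, ?_⟩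
    · show (B x u * winv) • u = (B x u * winv) • u + (B x u * winv) • (0 : E)
      rw [smul_zero, add_zero]
    · show τ (B x u * winv) • u = τ (B x u * winv) • (0 : E) + τ (B x u * winv) • u
      rw [smul_zero, zero_add]
  · intro x
    constructor
    · change B (x - (B x u * winv) • u) u = 0
      rw [hsub, hherm.2.2.1]
      linear_combination (-(B x u)) * hcw - hBf x
    · change B (x - (B x u * winv) • u) (0 : E) = 0
      exact BzeroR (τ := τ) (hherm := hherm) (x := x - (B x u * winv) • u)
  · intro x y
    change B (τ (B x u * winv) • u) (τ (B y u * winv) • u)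
      = B ((B y u * winv) • u) ((B x u * winv) • u)
    rw [hherm.2.2.1, hR, hτ, hherm.2.2.1, hR]
    ring
  · intro x h1 _
    have h1' : τ (B x u * winv) * B u u = 0 := by
      have h1'' := h1
      change B (τ (B x u * winv) • u) u = 0 at h1''
      rwa [hherm.2.2.1] at h1''
    have h2' : τ (B x u * winv) * f = 0 := by
      linear_combination winv * h1' - τ (B x u * winv) * hcw
    have h3 : B x u * winv * f = 0 := by
      have h4 := congrArg τ h2'
      rw [map_mul, hτ, hτf, map_zero] at h4
      exact h4
    constructor
    · change τ (B x u * winv) • u = 0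
      calc τ (B x u * winv) • u = τ (B x u * winv) • (f • u) := by rw [hfu]
        _ = (τ (B x u * winv) * f) • u := smul_smul _ _ _
        _ = 0 := by rw [h2', zero_smul]
    · change (B x u * winv) • u = 0
      calc (B x u * winv) • u = (B x u * winv) • (f • u) := by rw [hfu]
        _ = (B x u * winv * f) • u := smul_smul _ _ _
        _ = 0 := by rw [h3, zero_smul]
  · rintro ⟨h, -⟩
    exact hf0 (by rw [← hcw, h, zero_mul])


include hτ hε hherm in
lemma stepB (N : Submodule A E) (hnd : Nondeg B N)
    (u v : E) (hu : u ∈ N) (hv : v ∈ N) (f : A)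
    (hτf : τ f = f) (hfu : f • u = u) (hfv : f • v = v)
    (hBuu : B u u = 0) (hBvv : B v v = 0) (hBuv : B u v = f) (hf0 : f ≠ 0)
    (IH : ∀ N' : Submodule A E, N' < N → Nondeg B N' → Good k B N') :
    Good k B N := by
  have hR := BsmulR (τ := τ) (hherm := hherm)
  have hkL := BksmulL (τ := τ) (hherm := hherm)
  have hsub := BsubL (τ := τ) (hherm := hherm)
  have hexp := Bexpand (τ := τ) (hherm := hherm)
  have hε2' := hε2 (hε := hε) (A := A)
  have hBvu : B v u = ε * f := by rw [hherm.2.2.2.1 v u, hBuv, hτf]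
  have hfBu : ∀ x : E, f * B x u = B x u := by
    intro x; conv_rhs => rw [← hfu]
    rw [hR, hτf]
  have hfBv : ∀ x : E, f * B x v = B x v := by
    intro x; conv_rhs => rw [← hfv]
    rw [hR, hτf]
  let pF : E →ₗ[k] E :=
    { toFun := fun x => (B x v) • u + (ε * B x u) • v
      map_add' := by
        intro x y
        rw [hherm.1, hherm.1, mul_add, add_smul, add_smul]; abel
      map_smul' := by
        intro c x
        dsimp only [RingHom.id_apply]
        rw [hkL, hkL, mul_left_comm ε, mul_smul, mul_smul, algebraMap_smul,
          algebraMap_smul, ← smul_add] }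
  let sF : E →ₗ[k] E :=
    { toFun := fun x => τ (B x v) • v + τ (ε * B x u) • u
      map_add' := by
        intro x y
        rw [hherm.1, hherm.1, mul_add, map_add, map_add, add_smul, add_smul]; abel
      map_smul' := by
        intro c x
        dsimp only [RingHom.id_apply]
        rw [hkL, hkL, mul_left_comm ε, map_mul, map_mul, AlgEquiv.commutes,
          mul_smul, mul_smul, algebraMap_smul, algebraMap_smul, ← smul_add] }
  refine step (τ := τ) (hherm := hherm) (N := N) (hnd := hnd) (u := u) (v := v)
    (hu := hu) (hv := hv) (sF := sF) (pF := pF) (hspan := ?_) (hproj := ?_)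
    (hrev := ?_) (hker2 := ?_) (huN' := ?_) (IH := IH)
  · exact fun x => ⟨B x v, ε * B x u, rfl, rfl⟩
  · intro x
    constructor
    · change B (x - ((B x v) • u + (ε * B x u) • v)) u = 0
      rw [hsub, hherm.1, hherm.2.2.1, hherm.2.2.1, hBuu, hBvu]
      linear_combination (-(B x u * f)) * hε2' - hfBu x
    · change B (x - ((B x v) • u + (ε * B x u) • v)) v = 0
      rw [hsub, hherm.1, hherm.2.2.1, hherm.2.2.1, hBvv, hBuv]
      linear_combination -hfBv x
  · intro x y
    change B (τ (B x v) • v + τ (ε * B x u) • u) (τ (B y v) • v + τ (ε * B y u) • u)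
      = B ((B y v) • u + (ε * B y u) • v) ((B x v) • u + (ε * B x u) • v)
    rw [hexp, hexp]
    simp only [hτ]
    rw [hBuu, hBvv, hBuv, hBvu]
    ring
  · intro x h1 h2
    change B (τ (B x v) • v + τ (ε * B x u) • u) u = 0 at h1
    change B (τ (B x v) • v + τ (ε * B x u) • u) v = 0 at h2
    rw [hherm.1, hherm.2.2.1, hherm.2.2.1, hBvu, hBuu] at h1
    rw [hherm.1, hherm.2.2.1, hherm.2.2.1, hBvv, hBuv] at h2
    have ha : τ (B x v) * f = 0 := by
      linear_combination ε * h1 - (τ (B x v) * f) * hε2'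
    have hb : τ (ε * B x u) * f = 0 := by linear_combination h2
    have ha' : B x v * f = 0 := by
      have h4 := congrArg τ ha
      rw [map_mul, hτ, hτf, map_zero] at h4
      exact h4
    have hb' : ε * B x u * f = 0 := by
      have h4 := congrArg τ hb
      rw [map_mul, hτ, hτf, map_zero] at h4
      exact h4
    constructor
    · change τ (B x v) • v + τ (ε * B x u) • u = 0
      have e1 : τ (B x v) • v = 0 := by
        calc τ (B x v) • v = τ (B x v) • (f • v) := by rw [hfv]
          _ = (τ (B x v) * f) • v := smul_smul _ _ _
          _ = 0 := by rw [ha, zero_smul]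
      have e2 : τ (ε * B x u) • u = 0 := by
        calc τ (ε * B x u) • u = τ (ε * B x u) • (f • u) := by rw [hfu]
          _ = (τ (ε * B x u) * f) • u := smul_smul _ _ _
          _ = 0 := by rw [hb, zero_smul]
      rw [e1, e2, add_zero]
    · change (B x v) • u + (ε * B x u) • v = 0
      have e1 : (B x v) • u = 0 := by
        calc (B x v) • u = (B x v) • (f • u) := by rw [hfu]
          _ = (B x v * f) • u := smul_smul _ _ _
          _ = 0 := by rw [ha', zero_smul]
      have e2 : (ε * B x u) • v = 0 := by
        calc (ε * B x u) • v = (ε * B x u) • (f • v) := by rw [hfv]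
          _ = (ε * B x u * f) • v := smul_smul _ _ _
          _ = 0 := by rw [hb', zero_smul]
      rw [e1, e2, add_zero]
  · rintro ⟨-, h⟩
    exact hf0 (by rw [← hBuv, h])


include hτ hε hherm in
lemma good_of_nondeg :
    ∀ (n : ℕ) (N : Submodule A E), Module.finrank k (N.restrictScalars k) = n →
      Nondeg B N → Good k B N := by
  haveI : Module.Finite k E := Module.Finite.trans A E
  have hR := BsmulR (τ := τ) (hherm := hherm)
  intro n
  induction n using Nat.strong_induction_on with
  | _ n IHn =>
  intro N hrank hnd
  by_cases htriv : ∀ x ∈ N, x = (0 : E)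
  · refine ⟨0, fun x hx => by simp [N.zero_mem], fun x hx _ => htriv x hx, fun x hx y hy => ?_⟩
    rw [htriv x hx, htriv y hy]
    simp
  · push_neg at htriv
    obtain ⟨x₀, hx₀N, hx₀⟩ := htriv
    have IH : ∀ N' : Submodule A E, N' < N → Nondeg B N' → Good k B N' := by
      intro N' hlt hnd'
      have hlt' : N'.restrictScalars k < N.restrictScalars k := by
        refine lt_of_le_of_ne (fun x hx => hlt.le hx) (fun h => hlt.ne ?_)
        exact Submodule.restrictScalars_injective k A E h
      exact IHn _ (hrank ▸ Submodule.finrank_lt_finrank_of_lt hlt') N' rfl hnd'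
    -- construct a suitable idempotent e with a field block eA and e • x₀ ≠ 0
    set I : Ideal A := LinearMap.ker (LinearMap.toSpanSingleton A E x₀) with hI
    have hInot : I ≠ ⊤ := by
      intro h
      apply hx₀
      have h1 : (1 : A) ∈ I := by rw [h]; trivial
      have h2 := LinearMap.mem_ker.mp h1
      rwa [LinearMap.toSpanSingleton_apply, one_smul] at h2
    obtain ⟨m, hm, hIm⟩ := Ideal.exists_le_maximal I hInot
    obtain ⟨J, hJ⟩ := exists_isCompl (m : Submodule A A)
    have h1top : (1 : A) ∈ m ⊔ J := by rw [hJ.sup_eq_top]; trivial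
    obtain ⟨p, hp, e, he, hpe⟩ := Submodule.mem_sup.mp h1top
    have hmJ : ∀ z : A, z ∈ m → z ∈ J → z = 0 := by
      intro z h1 h2
      have h3 : z ∈ m ⊓ J := ⟨h1, h2⟩
      rw [hJ.inf_eq_bot] at h3
      exact h3
    have hJe : ∀ b : A, b * e ∈ J := by
      intro b
      have := J.smul_mem b he
      rwa [smul_eq_mul] at this
    have hpe0 : p * e = 0 := by
      refine hmJ _ ?_ (hJe p)
      have := Ideal.mul_mem_left m e hp
      rwa [mul_comm] at this
    have hee : e * e = e := by
      have h1 : (p + e) * e = 1 * e := by rw [hpe]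
      linear_combination h1 - hpe0
    have he0 : e • x₀ ≠ 0 := by
      intro h
      have heI : e ∈ I := by
        rw [hI]
        refine LinearMap.mem_ker.mpr ?_
        rwa [LinearMap.toSpanSingleton_apply]
      have h1 : (1 : A) ∈ m := by rw [← hpe]; exact m.add_mem hp (hIm heI)
      exact hm.ne_top ((Ideal.eq_top_iff_one m).mpr h1)
    have hene : e ≠ 0 := fun h => he0 (by rw [h, zero_smul])
    have hefield : ∀ c : A, c * e = c → c ≠ 0 → ∃ b, c * (b * e) = e := by
      intro c hce hc0
      have hcm : c ∉ m := by
        intro hcm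
        apply hc0
        have h2 : c ∈ J := hce ▸ hJe c
        exact hmJ c hcm h2
      obtain ⟨b, i, him, hbi⟩ := hm.exists_inv hcm
      refine ⟨b, ?_⟩
      have hie : i * e = 0 := by
        refine hmJ _ ?_ (hJe i)
        have := Ideal.mul_mem_left m e him
        rwa [mul_comm] at this
      linear_combination e * hbi - hie
    by_cases hτe : τ e = e
    · by_cases haniso : ∃ w ∈ N, B (e • w) (e • w) ≠ 0
      · -- anisotropic vector in the block: split off a line
        obtain ⟨w, hwN, hwB⟩ := haniso
        have hcu : B (e • w) (e • w) * e = B (e • w) (e • w) := by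
          have h1 : B (e • w) (e • w) = e * B w (e • w) := hherm.2.2.1 e w (e • w)
          rw [h1]
          linear_combination (B w (e • w)) * hee
        obtain ⟨b, hb⟩ := hefield _ hcu hwB
        refine stepA (τ := τ) (hτ := hτ) (hε := hε) (hherm := hherm) (N := N)
          (hnd := hnd) (u := e • w) (hu := N.smul_mem e hwN) (f := e) (winv := b * e)
          (hτf := hτe) (hfu := by rw [smul_smul, hee]) (hcw := hb) (hf0 := hene) (IH := IH)
      · -- totally isotropic block: build a hyperbolic pair
        push_neg at haniso
        have hxN : e • x₀ ∈ N := N.smul_mem e hx₀N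
        have hBy : ¬ ∀ y ∈ N, B (e • x₀) y = 0 := fun h => he0 (hnd _ hxN h)
        push_neg at hBy
        obtain ⟨y, hyN, hBxy⟩ := hBy
        have hxy : B (e • x₀) y = e * B x₀ y := hherm.2.2.1 e x₀ y
        have hc : B (e • x₀) (e • y) = B (e • x₀) y := by
          rw [hR, hτe, hxy]
          linear_combination (B x₀ y) * hee
        have hc0 : B (e • x₀) (e • y) ≠ 0 := by rw [hc]; exact hBxy
        have hce : B (e • x₀) (e • y) * e = B (e • x₀) (e • y) := by
          rw [hc, hxy]
          linear_combination (B x₀ y) * hee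
        obtain ⟨b, hb⟩ := hefield _ hce hc0
        have hτw : τ (b * e) = τ b * e := by rw [map_mul, hτe]
        refine stepB (τ := τ) (hτ := hτ) (hε := hε) (hherm := hherm) (N := N) (hnd := hnd)
          (u := e • x₀) (v := τ (b * e) • (e • y)) (hu := hxN)
          (hv := N.smul_mem _ (N.smul_mem e hyN)) (f := e) (hτf := hτe)
          (hfu := by rw [smul_smul, hee]) (hfv := ?_) (hBuu := haniso x₀ hx₀N)
          (hBvv := ?_) (hBuv := ?_) (hf0 := hene) (IH := IH)
        · rw [smul_smul]
          have h5 : e * τ (b * e) = τ (b * e) := by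
            rw [hτw]
            linear_combination (τ b) * hee
          rw [h5]
        · rw [hherm.2.2.1, hR, haniso y hyN, mul_zero, mul_zero]
        · rw [hR, hτ]
          linear_combination hb
    · -- the block is of "swap" type: e and τ e are orthogonal idempotents
      have hττ : τ e * τ e = τ e := by
        have := congrArg τ hee
        rwa [map_mul] at this
      have h0 : e * τ e = 0 := by
        by_contra hne
        have h1 : (e * τ e) * e = e * τ e := by linear_combination (τ e) * hee
        obtain ⟨b, hb⟩ := hefield _ h1 hne
        have k1 : b * e * τ e = e := by linear_combination hb - (b * τ e) * hee
        have k2 : b * e * τ e = e * τ e := by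
          linear_combination (τ e) * k1 - (b * e) * hττ
        have h2 : e * τ e = e := by rw [← k2]; exact k1
        have h3 : τ e * e = τ e := by
          have := congrArg τ h2
          rwa [map_mul, hτ] at this
        apply hτe
        rw [← h3, mul_comm]
        exact h2
      have hτf : τ (e + τ e) = e + τ e := by rw [map_add, hτ, add_comm]
      have hf0 : e + τ e ≠ 0 := by
        intro h
        apply hene
        linear_combination e * h - hee - h0
      have hε2' := hε2 (hε := hε) (A := A)
      have hxN : e • x₀ ∈ N := N.smul_mem e hx₀N
      have hBy : ¬ ∀ y ∈ N, B (e • x₀) y = 0 := fun h => he0 (hnd _ hxN h)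
      push_neg at hBy
      obtain ⟨y, hyN, hBxy⟩ := hBy
      have hxy : B (e • x₀) y = e * B x₀ y := hherm.2.2.1 e x₀ y
      have hc : B (e • x₀) (τ e • y) = B (e • x₀) y := by
        rw [hR, hτ, hxy]
        linear_combination (B x₀ y) * hee
      have hc0 : B (e • x₀) (τ e • y) ≠ 0 := by rw [hc]; exact hBxy
      have hce : B (e • x₀) (τ e • y) * e = B (e • x₀) (τ e • y) := by
        rw [hc, hxy]
        linear_combination (B x₀ y) * hee
      obtain ⟨b, hb⟩ := hefield _ hce hc0
      have hτw : τ (b * e) = τ b * τ e := map_mul τ b e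
      have hbτ : τ (B (e • x₀) (τ e • y)) * τ (b * e) = τ e := by
        have := congrArg τ hb
        rwa [map_mul] at this
      have hBxx : B (e • x₀) (e • x₀) = 0 := by
        rw [hherm.2.2.1, hR]
        linear_combination (B x₀ x₀) * h0
      have hByy : B ((τ e : A) • y) ((τ e : A) • y) = 0 := by
        rw [hherm.2.2.1, hR, hτ]
        linear_combination (B y y) * h0
      have hcu0 : ∀ X Y : E, B X X = 0 → B Y Y = 0 → B X Y * (b * e) = e →
          τ (B X Y) * τ (b * e) = τ e →
          B (X + τ (b * e) • Y) (X + τ (b * e) • Y) = e + ε * τ e := by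
        intro X Y h1 h2 h3 h4
        rw [hherm.1, hherm.2.1, hherm.2.1, h1, hR, hherm.2.2.1, hherm.2.2.1, hR, h2,
          hherm.2.2.2.1 Y X, hτ]
        linear_combination h3 + ε * h4
      have hcu : B (e • x₀ + τ (b * e) • ((τ e : A) • y))
          (e • x₀ + τ (b * e) • ((τ e : A) • y)) = e + ε * τ e :=
        hcu0 _ _ hBxx hByy hb hbτ
      refine stepA (τ := τ) (hτ := hτ) (hε := hε) (hherm := hherm) (N := N)
        (hnd := hnd) (u := e • x₀ + τ (b * e) • ((τ e : A) • y))
        (hu := N.add_mem hxN (N.smul_mem _ (N.smul_mem _ hyN)))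
        (f := e + τ e) (winv := e + ε * τ e)
        (hτf := hτf) (hfu := ?_) (hcw := ?_) (hf0 := hf0) (IH := IH)
      · rw [smul_add, smul_smul, smul_smul]
        have c1 : (e + τ e) * e = e := by linear_combination hee + h0
        have c2 : (e + τ e) * τ (b * e) = τ (b * e) := by
          rw [hτw]
          linear_combination (τ b) * hττ + (τ b) * h0
        rw [c1, c2]
      · rw [hcu]
        linear_combination hee + (ε * ε) * hττ + (τ e) * hε2' + (2 * ε) * h0


end MVWProof

/-- The MVW-extension `Ŭ(E)` of `U(E)` consists of pairs `(g, δ)` with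
`g ∈ GL(E_k)` and `δ = ±1`, such that `g` preserves the form if `δ = 1`, and reverses
it (`⟨gu, gv⟩ = ⟨v, u⟩`) if `δ = -1`.  The projection `Ŭ(E) → {±1}` is surjective:
there exist elements over `δ = 1` and over `δ = -1`; equivalently, there is a short
exact sequence `1 → U(E) → Ŭ(E) → {±1} → 1`. -/
theorem mvw_extension_surjective {k A : Type} [Field k] [CharZero k]
    [CommRing A] [Algebra k A] [FiniteDimensional k A] [IsSemisimpleRing A]
    (τ : A ≃ₐ[k] A) (hτ : ∀ a, τ (τ a) = a)
    (ε : A) (hε : ε = 1 ∨ ε = -1)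
    (E : Type) [AddCommGroup E] [Module A E] [Module.Finite A E]
    [Module k E] [IsScalarTower k A E]
    (B : E → E → A) (hherm : IsHermForm A τ ε E B) :
    (∃ g : E ≃ₗ[k] E, ∀ u v : E, B (g u) (g v) = B u v) ∧
    (∃ g : E ≃ₗ[k] E, ∀ u v : E, B (g u) (g v) = B v u) := by
  constructor
  · exact ⟨LinearEquiv.refl k E, fun u v => rfl⟩
  · haveI : Module.Finite k E := Module.Finite.trans A E
    have hnd : MVWProof.Nondeg B ⊤ := fun x _ h =>
      hherm.2.2.2.2 x (fun y => h y Submodule.mem_top)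
    obtain ⟨σ, hmem, hinj, hrev⟩ := MVWProof.good_of_nondeg (τ := τ) (hτ := hτ)
      (ε := ε) (hε := hε) (B := B) (hherm := hherm)
      (n := Module.finrank k ((⊤ : Submodule A E).restrictScalars k)) (N := ⊤) rfl hnd
    have hinj' : Function.Injective σ := by
      rw [← LinearMap.ker_eq_bot]
      exact LinearMap.ker_eq_bot'.mpr (fun x hx => hinj x Submodule.mem_top hx)
    have hsurj : Function.Surjective σ := LinearMap.injective_iff_surjective.mp hinj'
    exact ⟨LinearEquiv.ofBijective σ ⟨hinj', hsurj⟩,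
      fun u v => hrev u Submodule.mem_top v Submodule.mem_top⟩
end
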